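/- arXiv:0808.0964 — 9 statements merged into one kernel-verified Lean document; each statement's English description precedes it below -/
import Mathlib

section
/- (Theorem 1) For every integer n ≥ 0, the difference (2/[2]_q)·E_{n,q} − ∑_{j=0}^{p−1} (−1)^j [j]_q^n lies in [p]_q·ℤ_p, i.e. (2/[2]_q)·E_{n,q} ≡ ∑_{j=0}^{p−1} (−1)^j [j]_q^n (mod [p]_q) in ℤ_p. -/
/-- The `q`-analogue `[x]_q = 1 + q + ⋯ + q^(x-1)` in `ℤ_p`. -/
noncomputable def qnum {p : ℕ} [Fact p.Prime] (q : ℤ_[p]) (x : ℕ) : ℤ_[p] :=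
  ∑ l ∈ Finset.range x, q ^ l

/-- **Theorem 1.** For every `n ≥ 0`,
`(2/[2]_q)·E_{n,q} ≡ ∑_{j=0}^{p-1} (-1)^j [j]_q^n (mod [p]_q)` in `ℤ_p`. -/
theorem theorem1 (p : ℕ) [Fact p.Prime] (hp : Odd p)
    (q : ℤ_[p]) (hq : (p : ℤ_[p]) ∣ (q - 1))
    (E : ℕ → ℚ_[p])
    (hE : ∀ n : ℕ,
      (∑ k ∈ Finset.range (n + 1),
        (n.choose k : ℚ_[p]) * (q : ℚ_[p]) ^ k * E k) + E n
      = (1 + (q : ℚ_[p])) * (if n = 0 then 1 else 0))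
    (n : ℕ) :
    ∃ z : ℤ_[p],
      (2 / (1 + (q : ℚ_[p]))) * E n
        - ∑ j ∈ Finset.range p, (-1 : ℚ_[p]) ^ j * ((qnum q j : ℚ_[p])) ^ n
      = ((qnum q p : ℚ_[p])) * (z : ℚ_[p]) := by
  have hp2 : p ≠ 2 := by
    rintro rfl
    exact (by norm_num : ¬ Odd 2) hp
  set Q : ℚ_[p] := (q : ℚ_[p]) with hQdef
  -- 1 + q^m is a unit of ℤ_[p] for every m
  have hunit : ∀ m : ℕ, IsUnit ((1 : ℤ_[p]) + q ^ m) := by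
    intro m
    rw [PadicInt.isUnit_iff]
    have hdvd : (p : ℤ_[p]) ∣ q ^ m - 1 := by
      refine hq.trans ?_
      simpa using sub_dvd_pow_sub_pow q 1 m
    obtain ⟨c, hc⟩ := hdvd
    have hlt : ‖q ^ m - 1‖ < 1 := by
      rw [hc, norm_mul]
      calc ‖(p : ℤ_[p])‖ * ‖c‖ ≤ ‖(p : ℤ_[p])‖ * 1 :=
            mul_le_mul_of_nonneg_left c.norm_le_one (norm_nonneg _)
        _ = (p : ℝ)⁻¹ := by rw [mul_one, PadicInt.norm_p]
        _ < 1 := by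
            rw [inv_lt_one_iff₀]
            right
            exact_mod_cast (Fact.out : p.Prime).one_lt
    have h2 : ‖(2 : ℤ_[p])‖ = 1 := by
      have hle : ‖(2 : ℤ_[p])‖ ≤ 1 := PadicInt.norm_le_one _
      rcases lt_or_eq_of_le hle with h | h
      · exfalso
        have hdvd2 : ((p : ℤ)) ∣ (2 : ℤ) := by
          rw [← PadicInt.norm_int_lt_one_iff_dvd]
          exact_mod_cast h
        have : p ∣ 2 := Int.ofNat_dvd.mp (by exact_mod_cast hdvd2)
        exact hp2 ((Nat.prime_dvd_prime_iff_eq (Fact.out) Nat.prime_two).mp this)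
      · exact h
    have hrw : (1 : ℤ_[p]) + q ^ m = 2 + (q ^ m - 1) := by ring
    rw [hrw, PadicInt.norm_add_eq_max_of_ne (by rw [h2]; exact fun h => (h ▸ hlt).false),
      h2]
    exact max_eq_left hlt.le
  have h1Q : (1 : ℚ_[p]) + Q ≠ 0 := by
    have h := (hunit 1).ne_zero
    rw [pow_one] at h
    intro hcontra
    apply h
    rw [← PadicInt.coe_eq_zero]
    push_cast
    exact hcontra
  set S : ℕ → ℚ_[p] := fun m => ∑ j ∈ Finset.range p, (-1 : ℚ_[p]) ^ j * ((qnum q j : ℚ_[p])) ^ m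
    with hSdef
  set Cp : ℚ_[p] := ((qnum q p : ℚ_[p])) with hCpdef
  -- The recurrence for S
  have key : ∀ m : ℕ,
      (∑ k ∈ Finset.range (m + 1), (m.choose k : ℚ_[p]) * Q ^ k * S k) + S m
        = (0 : ℚ_[p]) ^ m + Cp ^ m := by
    intro m
    have step : ∀ j : ℕ,
        (∑ k ∈ Finset.range (m + 1), (m.choose k : ℚ_[p]) * Q ^ k * ((qnum q j : ℚ_[p])) ^ k)
          = ((qnum q (j + 1) : ℚ_[p])) ^ m := by
      intro j
      have h1 : (qnum q (j + 1) : ℚ_[p]) = Q * (qnum q j : ℚ_[p]) + 1 := by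
        have : qnum q (j + 1) = q * qnum q j + 1 := by
          simp only [qnum, Finset.sum_range_succ']
          rw [Finset.mul_sum]
          simp [pow_succ, mul_comm]
        rw [this]
        push_cast
        ring
      rw [h1, add_pow]
      apply Finset.sum_congr rfl
      intro k _
      rw [one_pow, mul_pow]
      ring
    have hswap : (∑ k ∈ Finset.range (m + 1), (m.choose k : ℚ_[p]) * Q ^ k * S k)
        = ∑ j ∈ Finset.range p, (-1 : ℚ_[p]) ^ j * ((qnum q (j + 1) : ℚ_[p])) ^ m := by
      simp only [hSdef, Finset.mul_sum]
      rw [Finset.sum_comm]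
      apply Finset.sum_congr rfl
      intro j _
      rw [← step j, Finset.mul_sum]
      apply Finset.sum_congr rfl
      intro k _
      ring
    rw [hswap, hSdef]
    rw [← Finset.sum_add_distrib]
    have hterm : ∀ j ∈ Finset.range p,
        (-1 : ℚ_[p]) ^ j * ((qnum q (j + 1) : ℚ_[p])) ^ m
          + (-1 : ℚ_[p]) ^ j * ((qnum q j : ℚ_[p])) ^ m
        = (fun i => (-1 : ℚ_[p]) ^ i * ((qnum q i : ℚ_[p])) ^ m) j
          - (fun i => (-1 : ℚ_[p]) ^ i * ((qnum q i : ℚ_[p])) ^ m) (j + 1) := by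
      intro j _
      simp only [pow_succ]
      ring
    rw [Finset.sum_congr rfl hterm, Finset.sum_range_sub']
    have h0 : (qnum q 0 : ℚ_[p]) = 0 := by simp [qnum]
    rw [h0, hp.neg_one_pow]
    simp [hCpdef]
  -- The recurrence for D m := (2/(1+Q)) * E m - S m
  have hD : ∀ m : ℕ,
      (∑ k ∈ Finset.range (m + 1),
          (m.choose k : ℚ_[p]) * Q ^ k * ((2 / (1 + Q)) * E k - S k))
        + ((2 / (1 + Q)) * E m - S m)
      = (0 : ℚ_[p]) ^ m - Cp ^ m := by
    intro m
    have expand : (∑ k ∈ Finset.range (m + 1),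
          (m.choose k : ℚ_[p]) * Q ^ k * ((2 / (1 + Q)) * E k - S k))
        + ((2 / (1 + Q)) * E m - S m)
      = (2 / (1 + Q)) * ((∑ k ∈ Finset.range (m + 1),
            (m.choose k : ℚ_[p]) * Q ^ k * E k) + E m)
        - ((∑ k ∈ Finset.range (m + 1), (m.choose k : ℚ_[p]) * Q ^ k * S k) + S m) := by
      have hterm : ∀ k ∈ Finset.range (m + 1),
          (m.choose k : ℚ_[p]) * Q ^ k * ((2 / (1 + Q)) * E k - S k)
            = (2 / (1 + Q)) * ((m.choose k : ℚ_[p]) * Q ^ k * E k)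
              - (m.choose k : ℚ_[p]) * Q ^ k * S k := by
        intro k _
        ring
      rw [Finset.sum_congr rfl hterm, Finset.sum_sub_distrib, ← Finset.mul_sum]
      ring
    rw [expand, hE m, key m]
    have hc : 2 / (1 + Q) * ((1 + Q) * (if m = 0 then 1 else 0))
        = 2 * (if m = 0 then 1 else 0) := by
      field_simp
    rw [hc]
    rcases Nat.eq_zero_or_pos m with rfl | hm
    · norm_num
    · rw [if_neg hm.ne', zero_pow hm.ne']
      ring
  -- main claim by strong induction
  have main : ∀ m : ℕ, ∃ z : ℤ_[p], (2 / (1 + Q)) * E m - S m = Cp * (z : ℚ_[p]) := by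
    intro m
    induction m using Nat.strong_induction_on with
    | _ m ih =>
      -- choose witnesses for smaller indices
      choose Z hZ using ih
      set Z' : ℕ → ℤ_[p] := fun k => if h : k < m then Z k h else 0 with hZ'def
      have hZ' : ∀ k < m, (2 / (1 + Q)) * E k - S k = Cp * ((Z' k : ℤ_[p]) : ℚ_[p]) := by
        intro k hk
        rw [hZ'def]
        simp only [dif_pos hk]
        exact hZ k hk
      set r : ℤ_[p] := if m = 0 then 0 else -(qnum q p) ^ (m - 1) with hrdef
      have hr : (0 : ℚ_[p]) ^ m - Cp ^ m = Cp * (r : ℚ_[p]) := by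
        rcases Nat.eq_zero_or_pos m with rfl | hm
        · simp [hrdef]
        · rw [hrdef, if_neg hm.ne', zero_pow hm.ne']
          push_cast
          rw [hCpdef]
          have hpow : (qnum q p : ℚ_[p]) * ((qnum q p : ℚ_[p])) ^ (m - 1)
              = ((qnum q p : ℚ_[p])) ^ m := by
            conv_rhs => rw [← Nat.sub_add_cancel hm]
            rw [pow_succ']
          linear_combination hpow
      set s : ℤ_[p] := ∑ k ∈ Finset.range m, (m.choose k : ℤ_[p]) * q ^ k * Z' k with hsdef
      have hsum : ∑ k ∈ Finset.range m,
          (m.choose k : ℚ_[p]) * Q ^ k * ((2 / (1 + Q)) * E k - S k)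
          = Cp * ((s : ℤ_[p]) : ℚ_[p]) := by
        rw [hsdef]
        rw [show (((∑ k ∈ Finset.range m, (m.choose k : ℤ_[p]) * q ^ k * Z' k : ℤ_[p])) : ℚ_[p])
            = ∑ k ∈ Finset.range m, (((m.choose k : ℤ_[p]) * q ^ k * Z' k : ℤ_[p]) : ℚ_[p]) from
          map_sum (PadicInt.Coe.ringHom) _ _]
        rw [Finset.mul_sum]
        apply Finset.sum_congr rfl
        intro k hk
        rw [hZ' k (Finset.mem_range.mp hk)]
        push_cast
        ring
      -- key equation
      have hkeyeq : ((1 : ℚ_[p]) + Q ^ m) * ((2 / (1 + Q)) * E m - S m)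
          = Cp * ((r - s : ℤ_[p]) : ℚ_[p]) := by
        have := hD m
        rw [Finset.sum_range_succ, Nat.choose_self, Nat.cast_one, one_mul] at this
        rw [hsum] at this
        push_cast
        linear_combination this + hr
      obtain ⟨u, hu⟩ := (hunit m).exists_right_inv
      refine ⟨u * (r - s), ?_⟩
      have hne : ((1 : ℚ_[p]) + Q ^ m) ≠ 0 := by
        have h := (hunit m).ne_zero
        intro hcontra
        apply h
        rw [← PadicInt.coe_eq_zero]
        push_cast
        exact hcontra
      apply mul_left_cancel₀ hne
      rw [hkeyeq]
      have huQ : ((1 : ℚ_[p]) + Q ^ m) * ((u : ℤ_[p]) : ℚ_[p]) = 1 := by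
        have : (((1 + q ^ m) * u : ℤ_[p]) : ℚ_[p]) = ((1 : ℤ_[p]) : ℚ_[p]) := by rw [hu]
        push_cast at this
        exact this
      push_cast
      linear_combination (-Cp * ((r : ℚ_[p]) - (s : ℚ_[p]))) * huQ
  exact main n
end

section
/- (Corollary 2) For every integer n ≥ 0, the element (2/[2]_q)·E_{n,q} + ∑_{j=0}^{p−1} (−1)^{j+1} [j]_q^n of ℚ_p is a p-adic integer, i.e. it lies in ℤ_p. -/
/-- **Corollary 2.** For every `n ≥ 0`,
`(2/[2]_q)·E_{n,q} + ∑_{j=0}^{p-1} (-1)^(j+1) [j]_q^n` is a `p`-adic integer. -/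
theorem corollary2 (p : ℕ) [Fact p.Prime] (hp : Odd p)
    (q : ℤ_[p]) (hq : (p : ℤ_[p]) ∣ (q - 1))
    (E : ℕ → ℚ_[p])
    (hE : ∀ n : ℕ,
      (∑ k ∈ Finset.range (n + 1),
        (n.choose k : ℚ_[p]) * (q : ℚ_[p]) ^ k * E k) + E n
      = (1 + (q : ℚ_[p])) * (if n = 0 then 1 else 0))
    (n : ℕ) :
    ∃ z : ℤ_[p],
      (z : ℚ_[p]) = (2 / (1 + (q : ℚ_[p]))) * E n
        + ∑ j ∈ Finset.range p, (-1 : ℚ_[p]) ^ (j + 1) * ((qnum q j : ℚ_[p])) ^ n := by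
  classical
  have hpp : p.Prime := Fact.out
  set Q : ℚ_[p] := (q : ℚ_[p]) with hQdef
  have hnormq : ‖Q‖ ≤ 1 := q.2
  have hnat : ∀ m : ℕ, ‖(m : ℚ_[p])‖ ≤ 1 := fun m => by
    simpa using Padic.norm_int_le_one (p := p) (m : ℤ)
  have h2 : ‖(2 : ℚ_[p])‖ = 1 := by
    have hle : ‖((2 : ℤ) : ℚ_[p])‖ ≤ 1 := Padic.norm_int_le_one _
    have hne : ¬ ‖((2 : ℤ) : ℚ_[p])‖ < 1 := by
      rw [Padic.norm_intCast_lt_one_iff]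
      intro hdvd
      have := Int.le_of_dvd (by norm_num) hdvd
      have hp2 : p ≠ 2 := by
        rintro rfl; exact (by norm_num : ¬ Odd 2) hp
      have h2le : 2 ≤ p := hpp.two_le
      have hle2 : (p : ℤ) ≤ 2 := this
      omega
    push_cast at hle hne
    linarith [lt_or_eq_of_le hle, not_lt.mp hne]
  -- ‖1 + Q^m‖ = 1
  have hunit : ∀ m : ℕ, ‖(1 : ℚ_[p]) + Q ^ m‖ = 1 := by
    intro m
    have hdvd : (p : ℤ_[p]) ∣ q ^ m - 1 := by
      refine hq.trans ?_
      simpa using sub_dvd_pow_sub_pow q 1 m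
    obtain ⟨c, hc⟩ := hdvd
    have hsmall : ‖Q ^ m - 1‖ < 1 := by
      have : Q ^ m - 1 = ((q ^ m - 1 : ℤ_[p]) : ℚ_[p]) := by push_cast; ring
      rw [this, hc]
      push_cast
      rw [norm_mul, Padic.norm_p]
      have hcle : ‖((c : ℤ_[p]) : ℚ_[p])‖ ≤ 1 := c.2
      have hpinv : ((p : ℝ))⁻¹ < 1 := by
        rw [inv_lt_one_iff₀]; right; exact_mod_cast hpp.one_lt
      calc ((p:ℝ))⁻¹ * ‖((c : ℤ_[p]) : ℚ_[p])‖ ≤ ((p:ℝ))⁻¹ * 1 := by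
            apply mul_le_mul_of_nonneg_left hcle (by positivity)
        _ < 1 := by simpa using hpinv
    have heq : (1 : ℚ_[p]) + Q ^ m = 2 + (Q ^ m - 1) := by ring
    have hne : ‖(2 : ℚ_[p])‖ ≠ ‖Q ^ m - 1‖ := by
      rw [h2]; exact (ne_of_lt hsmall).symm
    rw [heq, Padic.add_eq_max_of_ne hne, h2]
    exact max_eq_left (le_of_lt hsmall)
  -- abbreviations
  set S : ℕ → ℚ_[p] := fun m => ∑ j ∈ Finset.range p,
      (-1 : ℚ_[p]) ^ (j + 1) * ((qnum q j : ℚ_[p])) ^ m with hSdef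
  set G : ℕ → ℚ_[p] := fun m => (2 / (1 + Q)) * E m + S m with hGdef
  have hQne : (1 : ℚ_[p]) + Q ≠ 0 := by
    intro h
    have h1 := hunit 1
    rw [pow_one, h] at h1
    simp at h1
  have hstep : ∀ j : ℕ, ((qnum q (j+1) : ℤ_[p]) : ℚ_[p]) = Q * ((qnum q j : ℤ_[p]) : ℚ_[p]) + 1 := by
    intro j
    have h : qnum q (j+1) = q * qnum q j + 1 := by
      unfold qnum
      rw [Finset.sum_range_succ', Finset.mul_sum]
      simp [pow_succ, mul_comm]
    rw [h]
    push_cast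
    ring
  have hq0 : ((qnum q 0 : ℤ_[p]) : ℚ_[p]) = 0 := by
    unfold qnum; simp
  -- recurrence for S
  have hS : ∀ m : ℕ,
      (∑ k ∈ Finset.range (m+1), (m.choose k : ℚ_[p]) * Q ^ k * S k) + S m
        = -(if m = 0 then 1 else 0) - ((qnum q p : ℚ_[p])) ^ m := by
    intro m
    have key : (∑ k ∈ Finset.range (m+1), (m.choose k : ℚ_[p]) * Q ^ k * S k)
        = ∑ j ∈ Finset.range p,
            ((-1 : ℚ_[p])^(j+1) * ((qnum q (j+1) : ℚ_[p]))^m) := by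
      calc (∑ k ∈ Finset.range (m+1), (m.choose k : ℚ_[p]) * Q ^ k * S k)
          = ∑ k ∈ Finset.range (m+1), ∑ j ∈ Finset.range p,
              (-1:ℚ_[p])^(j+1) * ((Q * ((qnum q j : ℚ_[p])))^k * 1^(m-k) * (m.choose k)) := by
            refine Finset.sum_congr rfl fun k _ => ?_
            simp only [hSdef]
            rw [Finset.mul_sum]
            refine Finset.sum_congr rfl fun j _ => ?_
            rw [mul_pow]
            ring
        _ = ∑ j ∈ Finset.range p, (-1:ℚ_[p])^(j+1) * (Q * ((qnum q j : ℚ_[p])) + 1)^m := by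
            rw [Finset.sum_comm]
            refine Finset.sum_congr rfl fun j _ => ?_
            rw [← Finset.mul_sum, ← add_pow]
        _ = _ := by
            refine Finset.sum_congr rfl fun j _ => ?_
            rw [hstep]
    rw [key]
    have hshift : (∑ j ∈ Finset.range p, ((-1:ℚ_[p])^(j+1) * ((qnum q (j+1) : ℚ_[p]))^m))
        = (∑ j ∈ Finset.range (p+1), (-1:ℚ_[p])^j * ((qnum q j : ℚ_[p]))^m)
          - (-1:ℚ_[p])^0 * ((qnum q 0 : ℚ_[p]))^m := by
      rw [Finset.sum_range_succ' (fun j => (-1:ℚ_[p])^j * ((qnum q j : ℚ_[p]))^m) p]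
      ring
    rw [hshift, Finset.sum_range_succ]
    have hneg : (∑ j ∈ Finset.range p, (-1:ℚ_[p])^j * ((qnum q j : ℚ_[p]))^m) = -S m := by
      simp only [hSdef]
      rw [← Finset.sum_neg_distrib]
      refine Finset.sum_congr rfl fun j _ => ?_
      rw [pow_succ]
      ring
    rw [hneg, hq0, hp.neg_one_pow, zero_pow_eq]
    ring
  -- recurrence for G and extraction of the leading term
  have hc : (2/(1+Q)) * (1+Q) = 2 := by field_simp
  have hG : ∀ m : ℕ, (1 + Q ^ m) * G m
      = (if m = 0 then 1 else 0) - ((qnum q p : ℚ_[p]))^m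
        - ∑ k ∈ Finset.range m, (m.choose k : ℚ_[p]) * Q ^ k * G k := by
    intro m
    have hFm : (∑ k ∈ Finset.range (m+1), (m.choose k : ℚ_[p]) * Q ^ k * ((2/(1+Q)) * E k))
        + (2/(1+Q)) * E m = 2 * (if m = 0 then 1 else 0) := by
      calc (∑ k ∈ Finset.range (m+1), (m.choose k : ℚ_[p]) * Q ^ k * ((2/(1+Q)) * E k))
            + (2/(1+Q)) * E m
          = (2/(1+Q)) * ((∑ k ∈ Finset.range (m+1), (m.choose k : ℚ_[p]) * Q ^ k * E k) + E m) := by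
            rw [mul_add, Finset.mul_sum]
            congr 1
            exact Finset.sum_congr rfl fun k _ => by ring
        _ = (2/(1+Q)) * ((1+Q) * (if m = 0 then 1 else 0)) := by rw [hE m]
        _ = 2 * (if m = 0 then 1 else 0) := by rw [← mul_assoc, hc]
    have hsum : (∑ k ∈ Finset.range (m+1), (m.choose k : ℚ_[p]) * Q ^ k * G k) + G m
        = (if m = 0 then 1 else 0) - ((qnum q p : ℚ_[p]))^m := by
      have hsplit : ∑ k ∈ Finset.range (m+1), (m.choose k : ℚ_[p]) * Q ^ k * G k
          = (∑ k ∈ Finset.range (m+1), (m.choose k : ℚ_[p]) * Q ^ k * ((2/(1+Q)) * E k))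
            + ∑ k ∈ Finset.range (m+1), (m.choose k : ℚ_[p]) * Q ^ k * S k := by
        rw [← Finset.sum_add_distrib]
        refine Finset.sum_congr rfl fun k _ => ?_
        simp only [hGdef]
        ring
      rw [hsplit]
      simp only [hGdef]
      linear_combination hFm + hS m
    rw [Finset.sum_range_succ, Nat.choose_self] at hsum
    push_cast at hsum
    linear_combination hsum
  -- main bound by strong induction
  have main : ∀ m : ℕ, ‖G m‖ ≤ 1 := by
    intro m
    induction m using Nat.strong_induction_on with
    | _ m ih =>
      have h1 : ‖G m‖ = ‖(1 + Q ^ m) * G m‖ := by rw [norm_mul, hunit m, one_mul]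
      rw [h1, hG m]
      have hbound : ∀ x y : ℚ_[p], ‖x‖ ≤ 1 → ‖y‖ ≤ 1 → ‖x - y‖ ≤ 1 := fun x y hx hy => by
        rw [sub_eq_add_neg]
        refine le_trans (Padic.nonarchimedean _ _) ?_
        rw [norm_neg]
        exact max_le hx hy
      apply hbound
      apply hbound
      · split <;> simp
      · rw [norm_pow]
        exact pow_le_one₀ (norm_nonneg _) (qnum q p).2
      · apply IsUltrametricDist.norm_sum_le_of_forall_le_of_nonneg zero_le_one
        intro k hk
        rw [norm_mul, norm_mul, norm_pow]
        have hGk := ih k (Finset.mem_range.mp hk)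
        have hQk : ‖Q‖ ^ k ≤ 1 := pow_le_one₀ (norm_nonneg _) hnormq
        calc ‖(m.choose k : ℚ_[p])‖ * ‖Q‖ ^ k * ‖G k‖
            ≤ 1 * 1 * 1 := by
              apply mul_le_mul (mul_le_mul (hnat _) hQk (by positivity) zero_le_one) hGk
                (norm_nonneg _) (by norm_num)
          _ = 1 := by norm_num
  exact ⟨⟨G n, main n⟩, rfl⟩
end

section
/- (Corollary 3, Von Staudt–Clausen type theorem) For every integer n ≥ 0, the element (2/[2]_q)·E_{n,q} of ℚ_p is a p-adic integer, i.e. (2/(1+q))·E_{n,q} ∈ ℤ_p. -/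
/-- **Corollary 3** (Von Staudt–Clausen type theorem). For every `n ≥ 0`,
`(2/(1+q))·E_{n,q}` is a `p`-adic integer. -/
theorem corollary3 (p : ℕ) [Fact p.Prime] (hp : Odd p)
    (q : ℤ_[p]) (hq : (p : ℤ_[p]) ∣ (q - 1))
    (E : ℕ → ℚ_[p])
    (hE : ∀ n : ℕ,
      (∑ k ∈ Finset.range (n + 1),
        (n.choose k : ℚ_[p]) * (q : ℚ_[p]) ^ k * E k) + E n
      = (1 + (q : ℚ_[p])) * (if n = 0 then 1 else 0))
    (n : ℕ) :
    ∃ z : ℤ_[p], (z : ℚ_[p]) = (2 / (1 + (q : ℚ_[p]))) * E n := by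
  have hprime := (Fact.out : p.Prime)
  have h2 : ‖(2 : ℚ_[p])‖ = 1 := by
    have hle : ‖(2 : ℚ_[p])‖ ≤ 1 := by
      simpa using Padic.norm_int_le_one (p := p) 2
    have hnlt : ¬ ‖((2 : ℤ) : ℚ_[p])‖ < 1 := by
      rw [Padic.norm_intCast_lt_one_iff]
      intro hdvd
      have : (p : ℤ) ∣ 2 := hdvd
      have hple : p ∣ 2 := by exact_mod_cast this
      have hp2 : p = 2 := (Nat.prime_dvd_prime_iff_eq hprime Nat.prime_two).1 hple
      rw [hp2] at hp
      exact (Nat.not_odd_iff_even.2 (by norm_num)) hp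
    push_cast at hnlt
    exact le_antisymm hle (not_lt.1 hnlt)
  -- ‖q^n - 1‖ < 1 for all n
  have hqpow : ∀ m : ℕ, ‖((q : ℚ_[p]) ^ m - 1)‖ < 1 := by
    intro m
    have hdvd : (p : ℤ_[p]) ∣ (q ^ m - 1) := by
      have : (q - 1) ∣ (q ^ m - 1) := by
        simpa using sub_dvd_pow_sub_pow q 1 m
      exact hq.trans this
    obtain ⟨t, ht⟩ := hdvd
    have : ((q : ℚ_[p]) ^ m - 1) = (p : ℚ_[p]) * (t : ℚ_[p]) := by
      have := congrArg (PadicInt.Coe.ringHom (p := p)) ht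
      push_cast at this ⊢
      exact_mod_cast this
    rw [this, norm_mul]
    have hpn : ‖(p : ℚ_[p])‖ = (p : ℝ)⁻¹ := Padic.norm_p
    have htle : ‖(t : ℚ_[p])‖ ≤ 1 := t.norm_le_one
    calc ‖(p : ℚ_[p])‖ * ‖(t : ℚ_[p])‖ ≤ (p : ℝ)⁻¹ * 1 := by
          rw [hpn]; exact mul_le_mul_of_nonneg_left htle (by positivity)
      _ < 1 := by
          rw [mul_one]
          have : (1 : ℝ) < p := by exact_mod_cast hprime.one_lt
          exact inv_lt_one_of_one_lt₀ this
  have hone : ∀ m : ℕ, ‖(1 + (q : ℚ_[p]) ^ m)‖ = 1 := by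
    intro m
    have hne : ‖(2 : ℚ_[p])‖ ≠ ‖((q : ℚ_[p]) ^ m - 1)‖ := by
      rw [h2]; exact (hqpow m).ne'
    rw [show (1 + (q : ℚ_[p]) ^ m) = 2 + ((q : ℚ_[p]) ^ m - 1) by ring,
      Padic.add_eq_max_of_ne hne, h2]
    exact max_eq_left (hqpow m).le
  have h1q : ‖(1 + (q : ℚ_[p]))‖ = 1 := by simpa using hone 1
  have h1qne : (1 + (q : ℚ_[p])) ≠ 0 := by
    intro h; rw [h] at h1q; simp at h1q
  set c : ℚ_[p] := 2 / (1 + (q : ℚ_[p])) with hc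
  have hcq : c * (1 + (q : ℚ_[p])) = 2 := div_mul_cancel₀ _ h1qne
  have main : ∀ n : ℕ, ‖c * E n‖ ≤ 1 := by
    intro n
    induction n using Nat.strong_induction_on with
    | _ n ih =>
      have hrec := hE n
      rw [Finset.sum_range_succ] at hrec
      -- (1+q^n) * E n = (1+q)*δ - ∑_{k<n} ...
      have key : (1 + (q : ℚ_[p]) ^ n) * (c * E n)
          = c * ((1 + (q : ℚ_[p])) * (if n = 0 then 1 else 0))
            - ∑ k ∈ Finset.range n, (n.choose k : ℚ_[p]) * (q : ℚ_[p]) ^ k * (c * E k) := by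
        have hsum : ∑ k ∈ Finset.range n, (n.choose k : ℚ_[p]) * (q : ℚ_[p]) ^ k * (c * E k)
            = c * ∑ k ∈ Finset.range n, (n.choose k : ℚ_[p]) * (q : ℚ_[p]) ^ k * E k := by
          rw [Finset.mul_sum]
          refine Finset.sum_congr rfl fun k _ => by ring
        rw [hsum, ← mul_sub]
        have h5 : (1 + (q : ℚ_[p])) * (if n = 0 then 1 else 0)
            - ∑ k ∈ Finset.range n, (n.choose k : ℚ_[p]) * (q : ℚ_[p]) ^ k * E k
            = (1 + (q : ℚ_[p]) ^ n) * E n := by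
          rw [← hrec]
          simp only [Nat.choose_self, Nat.cast_one, one_mul]
          ring
        rw [h5]; ring
      have hrhs : ‖c * ((1 + (q : ℚ_[p])) * (if n = 0 then 1 else 0))
            - ∑ k ∈ Finset.range n, (n.choose k : ℚ_[p]) * (q : ℚ_[p]) ^ k * (c * E k)‖ ≤ 1 := by
        rw [sub_eq_add_neg]
        refine le_trans (Padic.nonarchimedean _ _) (max_le ?_ ?_)
        · rw [← mul_assoc, hcq]
          by_cases h : n = 0 <;> simp [h, h2]
        · rw [norm_neg]
          refine IsUltrametricDist.norm_sum_le_of_forall_le_of_nonneg zero_le_one fun k hk => ?_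
          rw [Finset.mem_range] at hk
          calc ‖(n.choose k : ℚ_[p]) * (q : ℚ_[p]) ^ k * (c * E k)‖
              = ‖(n.choose k : ℚ_[p])‖ * ‖(q : ℚ_[p]) ^ k‖ * ‖c * E k‖ := by
                rw [norm_mul, norm_mul]
            _ ≤ 1 * 1 * 1 := by
                gcongr
                · simpa using Padic.norm_int_le_one (p := p) (n.choose k)
                · rw [norm_pow]
                  exact pow_le_one₀ (norm_nonneg _) q.norm_le_one
                · exact ih k hk
            _ = 1 := by ring
      calc ‖c * E n‖ = ‖(1 + (q : ℚ_[p]) ^ n) * (c * E n)‖ := by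
            rw [norm_mul (1 + (q : ℚ_[p]) ^ n) (c * E n), hone n, one_mul]
        _ ≤ 1 := by rw [key]; exact hrhs
  exact ⟨⟨c * E n, main n⟩, rfl⟩
end

section
/- (Theorem 4, Kummer congruence) Let n ≥ 1 and let k, k′ ≥ 1 be integers with k ≡ k′ (mod p^n(p−1)). Then G_k(χ, q) − χ(p)·[p]_q^k·G_k(χ, q^p) ≡ G_{k′}(χ, q) − χ(p)·[p]_q^{k′}·G_{k′}(χ, q^p) (mod p^n ℤ_p). (Here q^p also satisfies q^p ≡ 1 (mod p), so G_m(χ, q^p) is defined.) -/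
namespace Theorem4Aux

variable {p : ℕ} [Fact p.Prime]

lemma qnum_mul (q : ℤ_[p]) (a b : ℕ) : qnum q (a * b) = qnum q a * qnum (q ^ a) b := by
  induction b with
  | zero => simp [qnum]
  | succ b ih =>
    have h1 : a * (b + 1) = a * b + a := by ring
    rw [h1]
    unfold qnum at *
    rw [Finset.sum_range_add, ih, Finset.sum_range_succ, mul_add]
    congr 1
    calc ∑ i ∈ Finset.range a, q ^ (a * b + i)
        = ∑ i ∈ Finset.range a, q ^ (a * b) * q ^ i := by
          refine Finset.sum_congr rfl fun i _ => ?_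
          rw [← pow_add]
      _ = (∑ l ∈ Finset.range a, q ^ l) * (q ^ a) ^ b := by
          rw [← Finset.mul_sum, ← pow_mul, mul_comm a b, mul_comm]

lemma sum_filter_dvd {c M : ℕ} (hc : 0 < c) {β : Type*} [AddCommMonoid β] (f : ℕ → β) :
    ∑ y ∈ (Finset.range (c * M)).filter (fun y => c ∣ y), f y
      = ∑ x ∈ Finset.range M, f (c * x) := by
  refine Finset.sum_nbij' (fun y => y / c) (fun x => c * x) ?_ ?_ ?_ ?_ ?_
  · intro a ha
    simp only [Finset.mem_filter, Finset.mem_range] at ha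
    exact Finset.mem_range.2 (Nat.div_lt_of_lt_mul (by omega))
  · intro a ha
    simp only [Finset.mem_range] at ha
    simp only [Finset.mem_filter, Finset.mem_range]
    exact ⟨(Nat.mul_lt_mul_left hc).mpr ha, Dvd.intro a rfl⟩
  · intro a ha
    simp only [Finset.mem_filter] at ha
    exact Nat.mul_div_cancel' ha.2
  · intro a _
    exact Nat.mul_div_cancel_left a hc
  · intro a ha
    simp only [Finset.mem_filter] at ha
    rw [Nat.mul_div_cancel' ha.2]

lemma dvd_of_toZModPow_eq_zero {n : ℕ} {z : ℤ_[p]}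
    (hz : PadicInt.toZModPow n z = 0) : (p : ℤ_[p]) ^ n ∣ z := by
  have h : z ∈ RingHom.ker (PadicInt.toZModPow (p := p) n) := RingHom.mem_ker.mpr hz
  rw [PadicInt.ker_toZModPow] at h
  simpa [Ideal.mem_span_singleton] using h

lemma pow_congr_of_unit {u : ℤ_[p]} (hu : IsUnit u) {n k k' : ℕ} (hn : 1 ≤ n)
    (hkk' : k ≡ k' [MOD p ^ n * (p - 1)]) : (p : ℤ_[p]) ^ n ∣ u ^ k - u ^ k' := by
  have hp : p.Prime := Fact.out
  haveI : NeZero (p ^ n) := ⟨pow_ne_zero n hp.ne_zero⟩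
  apply dvd_of_toZModPow_eq_zero
  rw [map_sub, sub_eq_zero, map_pow, map_pow]
  have hu' : IsUnit (PadicInt.toZModPow n u) := hu.map _
  have hw : (hu'.unit : ZMod (p ^ n)) = PadicInt.toZModPow n u := hu'.unit_spec
  rw [← hw, ← Units.val_pow_eq_pow_val, ← Units.val_pow_eq_pow_val]
  congr 1
  rw [pow_eq_pow_iff_modEq]
  refine hkk'.of_dvd ?_
  refine (orderOf_dvd_card).trans ?_
  rw [ZMod.card_units_eq_totient, Nat.totient_prime_pow hp hn]
  exact mul_dvd_mul (pow_dvd_pow p (by omega)) dvd_rfl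

lemma isUnit_qnum {q : ℤ_[p]} (hq : (p : ℤ_[p]) ∣ (q - 1)) {y : ℕ} (hy : ¬ p ∣ y) :
    IsUnit (qnum q y) := by
  have hp : p.Prime := Fact.out
  have h1 : (p : ℤ_[p]) ∣ (qnum q y - y) := by
    have he : qnum q y - (y : ℤ_[p]) = ∑ l ∈ Finset.range y, (q ^ l - 1) := by
      rw [Finset.sum_sub_distrib]
      simp [qnum]
    rw [he]
    refine Finset.dvd_sum fun l _ => hq.trans ?_
    simpa using sub_dvd_pow_sub_pow q 1 l
  have hy1 : ‖(y : ℤ_[p])‖ = 1 := by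
    have h2 : ¬ ((p : ℤ) ∣ (y : ℤ)) := by exact_mod_cast hy
    have h3 : ¬ (‖((y : ℤ) : ℤ_[p])‖ < 1) := fun h =>
      h2 ((PadicInt.norm_int_lt_one_iff_dvd _).1 h)
    have h5 : ((y : ℤ) : ℤ_[p]) = (y : ℤ_[p]) := by push_cast; rfl
    rw [h5] at h3
    exact le_antisymm (PadicInt.norm_le_one _) (not_lt.1 h3)
  have h5 : ‖qnum q y - (y : ℤ_[p])‖ < 1 := by
    obtain ⟨w, hw⟩ := h1
    rw [hw]
    calc ‖(p : ℤ_[p]) * w‖ = ‖(p : ℤ_[p])‖ * ‖w‖ := norm_mul _ _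
      _ ≤ ‖(p : ℤ_[p])‖ * 1 := by
          exact mul_le_mul_of_nonneg_left (PadicInt.norm_le_one w) (norm_nonneg _)
      _ < 1 := by
          rw [mul_one, PadicInt.norm_p]
          rw [inv_lt_one_iff₀]
          right
          exact_mod_cast hp.one_lt
  rw [PadicInt.isUnit_iff]
  by_contra hne
  have hle : ‖qnum q y‖ < 1 :=
    lt_of_le_of_ne (PadicInt.norm_le_one _) hne
  have : ‖(y : ℤ_[p])‖ < 1 := by
    have hyd : (y : ℤ_[p]) = qnum q y + -(qnum q y - y) := by ring
    rw [hyd]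
    refine lt_of_le_of_lt (PadicInt.nonarchimedean _ _) ?_
    rw [norm_neg]
    exact max_lt hle h5
  rw [hy1] at this
  exact lt_irrefl _ this

end Theorem4Aux

open Theorem4Aux in
/-- **Theorem 4** (Kummer congruence). If `k ≡ k' (mod pⁿ(p-1))` then
`G_k(χ,q) − χ(p)[p]_q^k G_k(χ,qᵖ) ≡ G_{k'}(χ,q) − χ(p)[p]_q^{k'} G_{k'}(χ,qᵖ) (mod pⁿ ℤ_p)`,
where `G_m(χ,r) = lim_N ∑_{x=0}^{dp^N−1} χ(x)(−1)^x [x]_r^m = (2/[2]_r)·E_{m,χ,r}`. -/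
theorem theorem4 (p : ℕ) [Fact p.Prime] (hp : Odd p)
    (q : ℤ_[p]) (hq : (p : ℤ_[p]) ∣ (q - 1))
    (d : ℕ) (hd : Odd d) (hdp : Nat.Coprime d p)
    (χ : DirichletCharacter ℤ_[p] d)
    (G : ℕ → ℤ_[p] → ℤ_[p])
    (hG : ∀ (m : ℕ) (r : ℤ_[p]), (p : ℤ_[p]) ∣ (r - 1) →
      Filter.Tendsto
        (fun N : ℕ => ∑ x ∈ Finset.range (d * p ^ N),
          χ (x : ZMod d) * (-1 : ℤ_[p]) ^ x * (qnum r x) ^ m)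
        Filter.atTop (nhds (G m r)))
    (n k k' : ℕ) (hn : 1 ≤ n) (hk : 1 ≤ k) (hk' : 1 ≤ k')
    (hkk' : k ≡ k' [MOD p ^ n * (p - 1)]) :
    (p : ℤ_[p]) ^ n ∣
      (G k q - χ (p : ZMod d) * (qnum q p) ^ k * G k (q ^ p))
        - (G k' q - χ (p : ZMod d) * (qnum q p) ^ k' * G k' (q ^ p)) := by
  have hpp : p.Prime := Fact.out
  have hppos : 0 < p := hpp.pos
  have hqp : (p : ℤ_[p]) ∣ (q ^ p - 1) := hq.trans (by simpa using sub_dvd_pow_sub_pow q 1 p)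
  set c : ℤ_[p] := χ (p : ZMod d) with hc
  set P : ℤ_[p] := qnum q p with hP
  -- the partial sums
  set S : ℕ → ℤ_[p] → ℕ → ℤ_[p] := fun m r N => ∑ x ∈ Finset.range (d * p ^ N),
    χ (x : ZMod d) * (-1 : ℤ_[p]) ^ x * (qnum r x) ^ m with hS
  set T : ℕ → ℕ → ℤ_[p] := fun m N => ∑ y ∈ (Finset.range (d * p ^ N)).filter
    (fun y => ¬ p ∣ y), χ (y : ZMod d) * (-1 : ℤ_[p]) ^ y * (qnum q y) ^ m with hT
  -- Claim 1 : T m (N+1) = S m q (N+1) - c * P^m * S m (q^p) N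
  have claim1 : ∀ m N : ℕ, T m (N + 1) = S m q (N + 1) - c * P ^ m * S m (q ^ p) N := by
    intro m N
    have hsplit := Finset.sum_filter_add_sum_filter_not (Finset.range (d * p ^ (N + 1)))
      (fun y => p ∣ y) (fun y => χ (y : ZMod d) * (-1 : ℤ_[p]) ^ y * (qnum q y) ^ m)
    have hrange : d * p ^ (N + 1) = p * (d * p ^ N) := by ring
    have hdvdpart : ∑ y ∈ (Finset.range (d * p ^ (N + 1))).filter (fun y => p ∣ y),
        χ (y : ZMod d) * (-1 : ℤ_[p]) ^ y * (qnum q y) ^ m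
        = c * P ^ m * ∑ x ∈ Finset.range (d * p ^ N),
            χ (x : ZMod d) * (-1 : ℤ_[p]) ^ x * (qnum (q ^ p) x) ^ m := by
      rw [hrange, sum_filter_dvd hppos]
      simp only [Finset.mul_sum]
      refine Finset.sum_congr rfl fun x _ => ?_
      have h1 : ((p * x : ℕ) : ZMod d) = (p : ZMod d) * (x : ZMod d) := by push_cast; ring
      have h2 : ((-1 : ℤ_[p])) ^ (p * x) = (-1 : ℤ_[p]) ^ x := by
        rw [pow_mul, hp.neg_one_pow]
      have h3 : qnum q (p * x) = P * qnum (q ^ p) x := qnum_mul q p x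
      rw [h1, map_mul, h2, h3, mul_pow]
      ring
    show (∑ y ∈ (Finset.range (d * p ^ (N + 1))).filter (fun y => ¬ p ∣ y),
        χ (y : ZMod d) * (-1 : ℤ_[p]) ^ y * (qnum q y) ^ m)
      = (∑ x ∈ Finset.range (d * p ^ (N + 1)),
          χ (x : ZMod d) * (-1 : ℤ_[p]) ^ x * (qnum q x) ^ m)
        - c * P ^ m * ∑ x ∈ Finset.range (d * p ^ N),
            χ (x : ZMod d) * (-1 : ℤ_[p]) ^ x * (qnum (q ^ p) x) ^ m
    rw [eq_sub_iff_add_eq, ← hdvdpart, add_comm]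
    exact hsplit
  -- Claim 2 : convergence of T m (N+1)
  have claim2 : ∀ m : ℕ, Filter.Tendsto (fun N => T m (N + 1)) Filter.atTop
      (nhds (G m q - c * P ^ m * G m (q ^ p))) := by
    intro m
    have h1 : Filter.Tendsto (fun N => S m q (N + 1)) Filter.atTop (nhds (G m q)) :=
      (hG m q hq).comp (Filter.tendsto_add_atTop_nat 1)
    have h2 : Filter.Tendsto (fun N => c * P ^ m * S m (q ^ p) N) Filter.atTop
        (nhds (c * P ^ m * G m (q ^ p))) := (hG m (q ^ p) hqp).const_mul _
    have h3 := h1.sub h2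
    refine h3.congr fun N => (claim1 m N).symm
  -- Claim 3 : termwise divisibility
  have claim3 : ∀ N : ℕ, (p : ℤ_[p]) ^ n ∣ T k (N + 1) - T k' (N + 1) := by
    intro N
    simp only [hT]
    rw [← Finset.sum_sub_distrib]
    refine Finset.dvd_sum fun y hy => ?_
    simp only [Finset.mem_filter] at hy
    have hu : IsUnit (qnum q y) := isUnit_qnum hq hy.2
    have := pow_congr_of_unit (p := p) hu hn hkk'
    have heq : χ (y : ZMod d) * (-1 : ℤ_[p]) ^ y * qnum q y ^ k
        - χ (y : ZMod d) * (-1 : ℤ_[p]) ^ y * qnum q y ^ k'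
        = χ (y : ZMod d) * (-1 : ℤ_[p]) ^ y * (qnum q y ^ k - qnum q y ^ k') := by ring
    rw [heq]
    exact this.mul_left _
  -- the limit of the difference
  have htend : Filter.Tendsto (fun N => T k (N + 1) - T k' (N + 1)) Filter.atTop
      (nhds ((G k q - c * P ^ k * G k (q ^ p)) - (G k' q - c * P ^ k' * G k' (q ^ p)))) :=
    (claim2 k).sub (claim2 k')
  -- divisibility is a closed condition
  have hclosed : IsClosed {z : ℤ_[p] | (p : ℤ_[p]) ^ n ∣ z} := by
    have hset : {z : ℤ_[p] | (p : ℤ_[p]) ^ n ∣ z} = {z : ℤ_[p] | ‖z‖ ≤ (p : ℝ) ^ (-(n : ℤ))} := by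
      ext z
      simp only [Set.mem_setOf_eq]
      rw [PadicInt.norm_le_pow_iff_mem_span_pow, Ideal.mem_span_singleton]
    rw [hset]
    exact IsClosed.preimage continuous_norm isClosed_Iic
  exact hclosed.mem_of_tendsto htend (Filter.Eventually.of_forall claim3)
end

section
/- (Equation (26)) Let χ be a nontrivial (hence primitive) Dirichlet character modulo p with values in ℤ_p. Then for every integer n ≥ 0, G_n(χ, q) − ∑_{a=0}^{p−1} χ(a)(−1)^a [a]_q^n lies in [p]_q·ℤ_p, i.e. (2/[2]_q)·E_{n,χ,q} ≡ ∑_{a=0}^{p−1} χ(a)(−1)^a [a]_q^n (mod [p]_q). -/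
namespace Eq26Aux

variable {p : ℕ} [Fact p.Prime]

lemma qnum_add (q : ℤ_[p]) (a b : ℕ) :
    qnum q (a + b) = qnum q a + q ^ a * qnum q b := by
  unfold qnum
  rw [Finset.sum_range_add, Finset.mul_sum]
  congr 1
  exact Finset.sum_congr rfl fun i _ => by rw [pow_add]

lemma qnum_dvd_mul (q : ℤ_[p]) (m : ℕ) : qnum q p ∣ qnum q (p * m) := by
  induction m with
  | zero => simp [qnum]
  | succ k ih =>
    rw [Nat.mul_succ, qnum_add]
    exact dvd_add ih (Dvd.dvd.mul_left dvd_rfl _)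

lemma qnum_dvd_sub (q : ℤ_[p]) (m a : ℕ) :
    qnum q p ∣ qnum q (p * m + a) - qnum q a := by
  rw [qnum_add]
  have h1 : q ^ (p * m) - 1 = qnum q (p * m) * (q - 1) := by
    rw [← geom_sum_mul]; rfl
  have : qnum q (p * m) + q ^ (p * m) * qnum q a - qnum q a
      = qnum q (p * m) + (qnum q (p * m) * (q - 1)) * qnum q a := by
    rw [← h1]; ring
  rw [this]
  exact dvd_add (qnum_dvd_mul q m)
    (Dvd.dvd.mul_right (Dvd.dvd.mul_right (qnum_dvd_mul q m) _) _)

lemma sum_range_mul {M K : ℕ} (f : ℕ → ℤ_[p]) :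
    ∑ x ∈ Finset.range (M * K), f x
      = ∑ m ∈ Finset.range K, ∑ a ∈ Finset.range M, f (M * m + a) := by
  induction K with
  | zero => simp
  | succ k ih =>
    rw [Nat.mul_succ, Finset.sum_range_add, ih, Finset.sum_range_succ]

lemma isClosed_dvd (r : ℤ_[p]) : IsClosed {x : ℤ_[p] | r ∣ x} := by
  by_cases hr : r = 0
  · subst hr
    have : {x : ℤ_[p] | (0 : ℤ_[p]) ∣ x} = {0} := by
      ext x; simp [eq_comm]
    rw [this]
    exact isClosed_singleton
  · set k := r.valuation with hk
    have hspec := PadicInt.unitCoeff_spec hr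
    have : {x : ℤ_[p] | r ∣ x} = {x : ℤ_[p] | ‖x‖ ≤ (p : ℝ) ^ (-(k : ℤ))} := by
      ext x
      simp only [Set.mem_setOf_eq]
      rw [PadicInt.norm_le_pow_iff_mem_span_pow, Ideal.mem_span_singleton]
      constructor
      · intro h
        exact dvd_trans (by rw [hspec]; exact Dvd.dvd.mul_left dvd_rfl _) h
      · intro h
        rw [hspec, mul_comm]
        exact (Units.mul_right_dvd).mpr h
    rw [this]
    exact isClosed_le continuous_norm continuous_const

end Eq26Aux

/-- **Equation (26).** For a nontrivial Dirichlet character `χ` modulo `p`,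
`G_n(χ,q) ≡ ∑_{a=0}^{p−1} χ(a)(−1)^a [a]_q^n (mod [p]_q)` in `ℤ_p`, where
`G_n(χ,q) = lim_N ∑_{x=0}^{p^{N+1}−1} χ(x)(−1)^x [x]_q^n = (2/[2]_q)·E_{n,χ,q}`. -/
theorem eq26 (p : ℕ) [Fact p.Prime] (hp : Odd p)
    (q : ℤ_[p]) (hq : (p : ℤ_[p]) ∣ (q - 1))
    (χ : DirichletCharacter ℤ_[p] p) (hχ : χ ≠ 1)
    (n : ℕ) (G : ℤ_[p])
    (hG : Filter.Tendsto
      (fun N : ℕ => ∑ x ∈ Finset.range (p ^ (N + 1)),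
        χ (x : ZMod p) * (-1 : ℤ_[p]) ^ x * (qnum q x) ^ n)
      Filter.atTop (nhds G)) :
    qnum q p ∣
      G - ∑ a ∈ Finset.range p, χ (a : ZMod p) * (-1 : ℤ_[p]) ^ a * (qnum q a) ^ n := by
  set r := qnum q p with hr
  set T := ∑ a ∈ Finset.range p, χ (a : ZMod p) * (-1 : ℤ_[p]) ^ a * (qnum q a) ^ n with hT
  set f : ℕ → ℤ_[p] := fun x => χ (x : ZMod p) * (-1 : ℤ_[p]) ^ x * (qnum q x) ^ n with hf
  -- each partial sum is ≡ T mod r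
  have key : ∀ N : ℕ, r ∣ (∑ x ∈ Finset.range (p ^ (N + 1)), f x) - T := by
    intro N
    have hpow : p ^ (N + 1) = p * p ^ N := by ring
    rw [hpow, Eq26Aux.sum_range_mul f]
    have hterm : ∀ m a : ℕ, a < p →
        r ∣ f (p * m + a) - (-1 : ℤ_[p]) ^ m * (χ (a : ZMod p) * (-1 : ℤ_[p]) ^ a * (qnum q a) ^ n) := by
      intro m a _
      have hcast : ((p * m + a : ℕ) : ZMod p) = (a : ZMod p) := by
        push_cast [ZMod.natCast_self]; ring
      have hsign : (-1 : ℤ_[p]) ^ (p * m + a) = (-1) ^ m * (-1) ^ a := by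
        rw [pow_add, pow_mul, hp.neg_one_pow]
      have : f (p * m + a) - (-1 : ℤ_[p]) ^ m * (χ (a : ZMod p) * (-1) ^ a * (qnum q a) ^ n)
          = χ (a : ZMod p) * ((-1) ^ m * (-1) ^ a) * ((qnum q (p * m + a)) ^ n - (qnum q a) ^ n) := by
        simp only [hf, hcast, hsign]; ring
      rw [this]
      exact Dvd.dvd.mul_left
        (dvd_trans (Eq26Aux.qnum_dvd_sub q m a) (sub_dvd_pow_sub_pow _ _ n)) _
    have hodd : ¬ Even (p ^ N) := by
      rw [Nat.not_even_iff_odd]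
      exact hp.pow
    have hsum1 : ∑ m ∈ Finset.range (p ^ N), (-1 : ℤ_[p]) ^ m = 1 := by
      rw [neg_one_geom_sum, if_neg hodd]
    have heq : (∑ m ∈ Finset.range (p ^ N), ∑ a ∈ Finset.range p, f (p * m + a)) - T
        = ∑ m ∈ Finset.range (p ^ N), ∑ a ∈ Finset.range p,
            (f (p * m + a) - (-1 : ℤ_[p]) ^ m * (χ (a : ZMod p) * (-1) ^ a * (qnum q a) ^ n)) := by
      simp only [Finset.sum_sub_distrib, ← Finset.mul_sum]
      rw [← Finset.sum_mul, hsum1, one_mul, hT]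
    rw [heq]
    exact Finset.dvd_sum fun m _ => Finset.dvd_sum fun a ha =>
      hterm m a (Finset.mem_range.mp ha)
  -- pass to the limit using closedness of the divisibility set
  have hC : IsClosed {x : ℤ_[p] | r ∣ x} := Eq26Aux.isClosed_dvd r
  have htend : Filter.Tendsto
      (fun N : ℕ => (∑ x ∈ Finset.range (p ^ (N + 1)), f x) - T)
      Filter.atTop (nhds (G - T)) := hG.sub tendsto_const_nhds
  exact hC.mem_of_tendsto htend (Filter.Eventually.of_forall key)
end

section
/- (Classical case, q → 1) Let χ be a nontrivial Dirichlet character modulo p with values in ℤ_p. Then for every integer n ≥ 0 the limit E_{n,χ} := lim_{N→∞} ∑_{x=0}^{p^N − 1} χ(x)(−1)^x x^n exists in ℤ_p, and E_{n,χ} ≡ ∑_{a=0}^{p−1} χ(a)(−1)^a a^n (mod p). -/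
open Finset

private lemma sum_range_mul_aux {M : Type*} [AddCommMonoid M] (f : ℕ → M) (a b : ℕ) :
    ∑ x ∈ range (a * b), f x = ∑ i ∈ range a, ∑ j ∈ range b, f (i * b + j) := by
  induction a with
  | zero => simp
  | succ a ih =>
    rw [Nat.succ_mul, Finset.sum_range_add, ih, Finset.sum_range_succ]

private lemma dvd_of_norm_le {p : ℕ} [hpp : Fact p.Prime] (x : ℤ_[p]) (N : ℕ)
    (h : ‖x‖ ≤ (p : ℝ) ^ (-(N : ℤ))) : (p : ℤ_[p]) ^ N ∣ x := by
  rw [← Ideal.mem_span_singleton, ← PadicInt.norm_le_pow_iff_mem_span_pow]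
  exact h

private lemma norm_le_of_dvd {p : ℕ} [hpp : Fact p.Prime] (x : ℤ_[p]) (N : ℕ)
    (h : (p : ℤ_[p]) ^ N ∣ x) : ‖x‖ ≤ (p : ℝ) ^ (-(N : ℤ)) := by
  rw [PadicInt.norm_le_pow_iff_mem_span_pow, Ideal.mem_span_singleton]
  exact h

/-- **Classical case (`q → 1`).** For a nontrivial Dirichlet character `χ` modulo `p`,
the generalized Euler number `E_{n,χ} = lim_N ∑_{x=0}^{p^N−1} χ(x)(−1)^x x^n` exists in
`ℤ_p` and `E_{n,χ} ≡ ∑_{a=0}^{p−1} χ(a)(−1)^a a^n (mod p)`. -/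
theorem classical_case (p : ℕ) [Fact p.Prime] (hp : Odd p)
    (χ : DirichletCharacter ℤ_[p] p) (hχ : χ ≠ 1) (n : ℕ) :
    ∃ E : ℤ_[p],
      Filter.Tendsto
        (fun N : ℕ => ∑ x ∈ Finset.range (p ^ N),
          χ (x : ZMod p) * (-1 : ℤ_[p]) ^ x * (x : ℤ_[p]) ^ n)
        Filter.atTop (nhds E) ∧
      (p : ℤ_[p]) ∣
        E - ∑ a ∈ Finset.range p, χ (a : ZMod p) * (-1 : ℤ_[p]) ^ a * (a : ℤ_[p]) ^ n := by
  have hp2 : 2 ≤ p := (Fact.out : p.Prime).two_le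
  set g : ℕ → ℤ_[p] := fun x => χ (x : ZMod p) * (-1 : ℤ_[p]) ^ x * (x : ℤ_[p]) ^ n with hg
  set S : ℕ → ℤ_[p] := fun N => ∑ x ∈ Finset.range (p ^ N), g x with hS
  -- key divisibility: p^N ∣ S (N+1) - S N
  have key : ∀ N : ℕ, (p : ℤ_[p]) ^ N ∣ S (N + 1) - S N := by
    intro N
    rcases Nat.eq_zero_or_pos N with hN | hN
    · simp [hN]
    have hpNodd : Odd (p ^ N) := hp.pow
    have hcast : ((p : ℕ) ^ N : ZMod p) = 0 := by
      have : (p : ℕ) ∣ p ^ N := dvd_pow_self p hN.ne'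
      exact_mod_cast (ZMod.natCast_eq_zero_iff _ p).2 this
    have hterm : ∀ i j : ℕ, (p : ℤ_[p]) ^ N ∣ g (i * p ^ N + j) - (-1 : ℤ_[p]) ^ i * g j := by
      intro i j
      have h1 : ((i * p ^ N + j : ℕ) : ZMod p) = (j : ZMod p) := by
        push_cast [hcast]; ring
      have h2 : (-1 : ℤ_[p]) ^ (i * p ^ N + j) = (-1) ^ i * (-1) ^ j := by
        rw [pow_add, pow_mul', hpNodd.neg_one_pow]
      have h3 : (p : ℤ_[p]) ^ N ∣ ((i * p ^ N + j : ℕ) : ℤ_[p]) ^ n - (j : ℤ_[p]) ^ n := by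
        refine dvd_trans ?_ (sub_dvd_pow_sub_pow _ _ n)
        have : ((i * p ^ N + j : ℕ) : ℤ_[p]) - (j : ℤ_[p]) = i * (p : ℤ_[p]) ^ N := by
          push_cast; ring
        rw [this]
        exact Dvd.intro_left _ rfl
      have : g (i * p ^ N + j) - (-1 : ℤ_[p]) ^ i * g j
          = χ (j : ZMod p) * ((-1) ^ i * (-1) ^ j)
            * (((i * p ^ N + j : ℕ) : ℤ_[p]) ^ n - (j : ℤ_[p]) ^ n) := by
        simp only [hg, h1, h2]; ring
      rw [this]
      exact Dvd.dvd.mul_left h3 _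
    have hsplit : S (N + 1) = ∑ i ∈ range p, ∑ j ∈ range (p ^ N), g (i * p ^ N + j) := by
      simp only [hS, pow_succ']
      exact sum_range_mul_aux g p (p ^ N)
    have hsum : S (N + 1) - S N
        = ∑ i ∈ range p, ∑ j ∈ range (p ^ N),
            (g (i * p ^ N + j) - (-1 : ℤ_[p]) ^ i * g j) := by
      rw [hsplit]
      have : (∑ i ∈ range p, ∑ j ∈ range (p ^ N), (-1 : ℤ_[p]) ^ i * g j)
          = (∑ i ∈ range p, (-1 : ℤ_[p]) ^ i) * S N := by
        rw [Finset.sum_mul]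
        exact Finset.sum_congr rfl fun i _ => (Finset.mul_sum _ _ _).symm
      have hgeo : (∑ i ∈ range p, (-1 : ℤ_[p]) ^ i) = 1 := by
        rw [neg_one_geom_sum, if_neg (Nat.not_even_iff_odd.2 hp)]
      simp only [Finset.sum_sub_distrib, this, hgeo, one_mul]
    rw [hsum]
    exact Finset.dvd_sum fun i _ => Finset.dvd_sum fun j _ => hterm i j
  -- Cauchy
  have hdist : ∀ N : ℕ, dist (S N) (S (N + 1)) ≤ 1 * ((p : ℝ)⁻¹) ^ N := by
    intro N
    rw [dist_eq_norm, norm_sub_rev, one_mul, inv_pow, ← zpow_natCast, ← zpow_neg]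
    exact norm_le_of_dvd _ N (key N)
  have hcauchy : CauchySeq S := by
    refine cauchySeq_of_le_geometric (p : ℝ)⁻¹ 1 ?_ hdist
    rw [inv_lt_one_iff₀]
    right; exact_mod_cast Nat.lt_of_lt_of_le one_lt_two hp2
  obtain ⟨E, hE⟩ := cauchySeq_tendsto_of_complete hcauchy
  refine ⟨E, hE, ?_⟩
  -- congruence mod p
  have hS1 : ∀ N : ℕ, 1 ≤ N → (p : ℤ_[p]) ∣ S N - S 1 := by
    intro N hN
    induction N with
    | zero => omega
    | succ N ih =>
      rcases Nat.eq_zero_or_pos N with h0 | h0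
      · simp [h0]
      have h1 : (p : ℤ_[p]) ∣ S (N + 1) - S N :=
        dvd_trans (dvd_pow_self _ h0.ne') (key N)
      have := ih h0
      have : S (N + 1) - S 1 = (S (N + 1) - S N) + (S N - S 1) := by ring
      rw [this]
      exact dvd_add h1 (ih h0)
  have hlim : Filter.Tendsto (fun N => S N - S 1) Filter.atTop (nhds (E - S 1)) :=
    hE.sub tendsto_const_nhds
  have hnorm : ‖E - S 1‖ ≤ (p : ℝ) ^ (-(1 : ℕ) : ℤ) := by
    have hcont : Filter.Tendsto (fun N => ‖S N - S 1‖) Filter.atTop (nhds ‖E - S 1‖) :=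
      hlim.norm
    refine le_of_tendsto hcont ?_
    filter_upwards [Filter.eventually_ge_atTop 1] with N hN
    exact norm_le_of_dvd _ 1 (by simpa using hS1 N hN)
  have hfin : (p : ℤ_[p]) ^ 1 ∣ E - S 1 := dvd_of_norm_le _ 1 hnorm
  rw [pow_one] at hfin
  have : S 1 = ∑ a ∈ Finset.range p, χ (a : ZMod p) * (-1 : ℤ_[p]) ^ a * (a : ℤ_[p]) ^ n := by
    simp [hS, hg]
  rwa [this] at hfin
end

section
/- (Witt-type formula) For every integer n ≥ 0, the sequence N ↦ ∑_{x=0}^{p^N − 1} (−1)^x [x]_q^n converges in ℤ_p and its limit equals (2/[2]_q)·E_{n,q}; that is, lim_{N→∞} ∑_{x=0}^{p^N − 1} (−1)^x [x]_q^n = (2/(1+q))·E_{n,q} in ℚ_p. -/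
section WittAux

variable {p : ℕ} [Fact p.Prime]

lemma qnum_add (q : ℤ_[p]) (a b : ℕ) :
    qnum q (a + b) = qnum q a + q ^ a * qnum q b := by
  simp [qnum, Finset.sum_range_add, pow_add, Finset.mul_sum]

lemma qnum_one' (q : ℤ_[p]) : qnum q 1 = 1 := by simp [qnum]

lemma qnum_mul (q : ℤ_[p]) (a b : ℕ) :
    qnum q (a * b) = qnum q a * ∑ j ∈ Finset.range b, (q ^ a) ^ j := by
  induction b with
  | zero => simp [qnum]
  | succ b ih =>
      rw [Nat.mul_succ, qnum_add, ih, Finset.sum_range_succ, ← pow_mul]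
      ring

lemma qnum_mul_sub_one (q : ℤ_[p]) (m : ℕ) : qnum q m * (q - 1) = q ^ m - 1 := by
  simpa [qnum] using geom_sum_mul q m

lemma p_dvd_sub_one_pow (q : ℤ_[p]) (hq : (p : ℤ_[p]) ∣ q - 1) (m : ℕ) :
    (p : ℤ_[p]) ∣ q ^ m - 1 :=
  hq.trans (by simpa using sub_dvd_pow_sub_pow q 1 m)

lemma p_dvd_qnum_self (q : ℤ_[p]) (hq : (p : ℤ_[p]) ∣ q - 1) :
    (p : ℤ_[p]) ∣ qnum q p := by
  have h : qnum q p = (∑ l ∈ Finset.range p, (q ^ l - 1)) + p := by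
    rw [Finset.sum_sub_distrib]
    simp [qnum]
  rw [h]
  exact dvd_add (Finset.dvd_sum fun l _ => p_dvd_sub_one_pow q hq l) dvd_rfl

lemma ppow_dvd_qnum (q : ℤ_[p]) (hq : (p : ℤ_[p]) ∣ q - 1) (N : ℕ) :
    (p : ℤ_[p]) ^ N ∣ qnum q (p ^ N) := by
  induction N with
  | zero => simp [qnum]
  | succ N ih =>
      rw [pow_succ, pow_succ, qnum_mul]
      exact mul_dvd_mul ih (p_dvd_qnum_self _ (p_dvd_sub_one_pow q hq _))

lemma ppow_dvd_qnum_mul (q : ℤ_[p]) (hq : (p : ℤ_[p]) ∣ q - 1) (N j : ℕ) :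
    (p : ℤ_[p]) ^ N ∣ qnum q (p ^ N * j) := by
  rw [qnum_mul]
  exact (ppow_dvd_qnum q hq N).mul_right _

lemma ppow_dvd_pow_sub_one (q : ℤ_[p]) (hq : (p : ℤ_[p]) ∣ q - 1) (N j : ℕ) :
    (p : ℤ_[p]) ^ N ∣ q ^ (p ^ N * j) - 1 := by
  rw [← qnum_mul_sub_one]
  exact (ppow_dvd_qnum_mul q hq N j).mul_right _

lemma sum_range_mul_split {M : Type*} [AddCommMonoid M] (f : ℕ → M) (a b : ℕ) :
    ∑ x ∈ Finset.range (a * b), f x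
      = ∑ j ∈ Finset.range b, ∑ i ∈ Finset.range a, f (a * j + i) := by
  induction b with
  | zero => simp
  | succ b ih =>
      rw [Nat.mul_succ, Finset.sum_range_add, ih, Finset.sum_range_succ]

lemma padicInt_coe_sum {ι : Type*} (s : Finset ι) (f : ι → ℤ_[p]) :
    ((∑ i ∈ s, f i : ℤ_[p]) : ℚ_[p]) = ∑ i ∈ s, ((f i : ℤ_[p]) : ℚ_[p]) := by
  classical
  induction s using Finset.cons_induction with
  | empty => simp
  | cons a s ha ih => rw [Finset.sum_cons, Finset.sum_cons, PadicInt.coe_add, ih]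

end WittAux

/-- **Witt-type formula.** For every `n ≥ 0`,
`lim_{N→∞} ∑_{x=0}^{p^N−1} (−1)^x [x]_q^n = (2/(1+q))·E_{n,q}` in `ℚ_p`. -/
theorem witt_type_formula (p : ℕ) [Fact p.Prime] (hp : Odd p)
    (q : ℤ_[p]) (hq : (p : ℤ_[p]) ∣ (q - 1))
    (E : ℕ → ℚ_[p])
    (hE : ∀ n : ℕ,
      (∑ k ∈ Finset.range (n + 1),
        (n.choose k : ℚ_[p]) * (q : ℚ_[p]) ^ k * E k) + E n
      = (1 + (q : ℚ_[p])) * (if n = 0 then 1 else 0))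
    (n : ℕ) :
    Filter.Tendsto
      (fun N : ℕ =>
        ((∑ x ∈ Finset.range (p ^ N), (-1 : ℤ_[p]) ^ x * (qnum q x) ^ n : ℤ_[p]) : ℚ_[p]))
      Filter.atTop (nhds ((2 / (1 + (q : ℚ_[p]))) * E n)) := by
  have hpp : p.Prime := Fact.out
  have hp1 : (1 : ℝ) < p := by exact_mod_cast hpp.one_lt
  set S : ℕ → ℕ → ℤ_[p] :=
    fun m N => ∑ x ∈ Finset.range (p ^ N), (-1 : ℤ_[p]) ^ x * (qnum q x) ^ m with hS
  -- key divisibility: p^N ∣ S m (N+1) - S m N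
  have key_dvd : ∀ m N, (p : ℤ_[p]) ^ N ∣ S m (N + 1) - S m N := by
    intro m N
    have hpN : Odd (p ^ N) := hp.pow
    have hsplit : S m (N + 1)
        = ∑ j ∈ Finset.range p, (-1 : ℤ_[p]) ^ j *
            (∑ i ∈ Finset.range (p ^ N), (-1 : ℤ_[p]) ^ i * (qnum q (p ^ N * j + i)) ^ m) := by
      rw [hS]
      simp only
      rw [pow_succ, sum_range_mul_split]
      refine Finset.sum_congr rfl fun j _ => ?_
      rw [Finset.mul_sum]
      refine Finset.sum_congr rfl fun i _ => ?_
      rw [pow_add, pow_mul, hpN.neg_one_pow]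
      ring
    have hgeo : ∑ j ∈ Finset.range p, (-1 : ℤ_[p]) ^ j = 1 := by
      rw [neg_one_geom_sum, if_neg (Nat.not_even_iff_odd.mpr hp)]
    have hdiff : S m (N + 1) - S m N
        = ∑ j ∈ Finset.range p, (-1 : ℤ_[p]) ^ j *
            ((∑ i ∈ Finset.range (p ^ N), (-1 : ℤ_[p]) ^ i * (qnum q (p ^ N * j + i)) ^ m)
              - S m N) := by
      rw [hsplit]
      simp only [mul_sub, Finset.sum_sub_distrib, ← Finset.sum_mul, hgeo, one_mul]
    rw [hdiff]
    refine Finset.dvd_sum fun j _ => Dvd.dvd.mul_left ?_ _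
    rw [hS]
    simp only
    rw [← Finset.sum_sub_distrib]
    refine Finset.dvd_sum fun i _ => ?_
    have h1 : (p : ℤ_[p]) ^ N ∣ qnum q (p ^ N * j + i) - qnum q i := by
      have : qnum q (p ^ N * j + i) - qnum q i
          = qnum q (p ^ N * j) + (q ^ (p ^ N * j) - 1) * qnum q i := by
        rw [qnum_add]; ring
      rw [this]
      exact dvd_add (ppow_dvd_qnum_mul q hq N j)
        ((ppow_dvd_pow_sub_one q hq N j).mul_right _)
    have h2 : (p : ℤ_[p]) ^ N ∣ (qnum q (p ^ N * j + i)) ^ m - (qnum q i) ^ m :=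
      h1.trans (sub_dvd_pow_sub_pow _ _ m)
    calc (p : ℤ_[p]) ^ N ∣ (qnum q (p ^ N * j + i)) ^ m - (qnum q i) ^ m := h2
      _ ∣ (-1 : ℤ_[p]) ^ i * (qnum q (p ^ N * j + i)) ^ m
            - (-1 : ℤ_[p]) ^ i * (qnum q i) ^ m := by
          rw [← mul_sub]; exact Dvd.intro_left _ rfl
  -- norm bound from divisibility
  have norm_le : ∀ z : ℤ_[p], ∀ N : ℕ, (p : ℤ_[p]) ^ N ∣ z → ‖z‖ ≤ ((p : ℝ)⁻¹) ^ N := by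
    intro z N hz
    have := (PadicInt.norm_le_pow_iff_mem_span_pow z N).2
      (Ideal.mem_span_singleton.2 hz)
    calc ‖z‖ ≤ (p : ℝ) ^ (-(N : ℤ)) := this
      _ = ((p : ℝ)⁻¹) ^ N := by
          rw [zpow_neg, zpow_natCast, inv_pow]
  -- each S m is a Cauchy sequence
  have hcau : ∀ m, CauchySeq (S m) := by
    intro m
    refine cauchySeq_of_le_geometric ((p : ℝ)⁻¹) 1 ?_ fun N => ?_
    · exact inv_lt_one_of_one_lt₀ hp1
    · rw [dist_eq_norm, one_mul]
      have h : (p : ℤ_[p]) ^ N ∣ S m N - S m (N + 1) := by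
        rw [← neg_sub]; exact dvd_neg.mpr (key_dvd m N)
      exact norm_le _ N h
  have hex : ∀ m, ∃ L : ℤ_[p], Filter.Tendsto (S m) Filter.atTop (nhds L) :=
    fun m => cauchySeq_tendsto_of_complete (hcau m)
  choose L hL using hex
  -- coerced convergence in ℚ_p
  have hL' : ∀ m, Filter.Tendsto (fun N => ((S m N : ℚ_[p]))) Filter.atTop
      (nhds ((L m : ℚ_[p]))) := by
    intro m
    have h := hL m
    rw [tendsto_iff_norm_sub_tendsto_zero] at h ⊢
    have heq : ∀ N, ‖((S m N : ℚ_[p])) - ((L m : ℚ_[p]))‖ = ‖S m N - L m‖ := by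
      intro N; rw [← PadicInt.coe_sub, ← PadicInt.norm_def]
    simpa only [heq] using h
  -- recurrence for partial sums
  have S_rec : ∀ m N,
      (∑ k ∈ Finset.range (m + 1), (m.choose k : ℤ_[p]) * q ^ k * S k N) + S m N
        = (if m = 0 then 1 else 0) + qnum q (p ^ N) ^ m := by
    intro m N
    have hM : Odd (p ^ N) := hp.pow
    set M := p ^ N with hMdef
    have h1 : ∑ x ∈ Finset.range M, (-1 : ℤ_[p]) ^ x * (qnum q (x + 1)) ^ m
        = ∑ k ∈ Finset.range (m + 1), (m.choose k : ℤ_[p]) * q ^ k * S k N := by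
      have hterm : ∀ x, (qnum q (x + 1)) ^ m
          = ∑ k ∈ Finset.range (m + 1),
              (m.choose k : ℤ_[p]) * q ^ k * (qnum q x) ^ k := by
        intro x
        have hx : qnum q (x + 1) = q * qnum q x + 1 := by
          rw [Nat.add_comm, qnum_add, qnum_one']; ring
        rw [hx, add_pow]
        refine Finset.sum_congr rfl fun k _ => ?_
        rw [mul_pow, one_pow]
        ring
      calc ∑ x ∈ Finset.range M, (-1 : ℤ_[p]) ^ x * (qnum q (x + 1)) ^ m
          = ∑ x ∈ Finset.range M, ∑ k ∈ Finset.range (m + 1),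
              (m.choose k : ℤ_[p]) * q ^ k * ((-1 : ℤ_[p]) ^ x * (qnum q x) ^ k) := by
            refine Finset.sum_congr rfl fun x _ => ?_
            rw [hterm x, Finset.mul_sum]
            refine Finset.sum_congr rfl fun k _ => ?_
            ring
        _ = ∑ k ∈ Finset.range (m + 1), (m.choose k : ℤ_[p]) * q ^ k * S k N := by
            rw [Finset.sum_comm]
            refine Finset.sum_congr rfl fun k _ => ?_
            rw [hS]
            simp only
            rw [Finset.mul_sum]
    have h2 : ∑ x ∈ Finset.range M, (-1 : ℤ_[p]) ^ x * (qnum q (x + 1)) ^ m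
        = (if m = 0 then 1 else 0) + qnum q M ^ m - S m N := by
      have hshift : ∑ x ∈ Finset.range (M + 1), (-1 : ℤ_[p]) ^ x * (qnum q x) ^ m
          = (∑ x ∈ Finset.range M, (-1 : ℤ_[p]) ^ (x + 1) * (qnum q (x + 1)) ^ m)
            + (-1 : ℤ_[p]) ^ 0 * (qnum q 0) ^ m :=
        Finset.sum_range_succ' _ M
      have hzero : (qnum q 0) ^ m = (if m = 0 then 1 else 0) := by
        simp [qnum, zero_pow_eq]
      have hstep : ∑ x ∈ Finset.range (M + 1), (-1 : ℤ_[p]) ^ x * (qnum q x) ^ m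
          = S m N + (-1 : ℤ_[p]) ^ M * (qnum q M) ^ m := by
        rw [hS]; simp only; rw [Finset.sum_range_succ]
      have hsign : ∀ x : ℕ, (-1 : ℤ_[p]) ^ (x + 1) * (qnum q (x + 1)) ^ m
          = -((-1 : ℤ_[p]) ^ x * (qnum q (x + 1)) ^ m) := by
        intro x; rw [pow_succ]; ring
      rw [hstep, hM.neg_one_pow] at hshift
      simp only [hsign, Finset.sum_neg_distrib] at hshift
      rw [pow_zero, one_mul, hzero] at hshift
      linear_combination hshift
    rw [← h1, h2]
    ring
  -- qnum q (p^N) tends to 0 in ℚ_p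
  have hqnum0 : Filter.Tendsto (fun N => ((qnum q (p ^ N) : ℚ_[p]))) Filter.atTop (nhds 0) := by
    refine squeeze_zero_norm (a := fun N => ((p : ℝ)⁻¹) ^ N) (fun N => ?_) ?_
    · show ‖((qnum q (p ^ N) : ℚ_[p]))‖ ≤ ((p : ℝ)⁻¹) ^ N
      rw [← PadicInt.norm_def]
      exact norm_le _ N (by simpa using ppow_dvd_qnum q hq N)
    · exact tendsto_pow_atTop_nhds_zero_of_lt_one
        (by positivity) (inv_lt_one_of_one_lt₀ hp1)
  -- limit recurrence
  have hrecL : ∀ m,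
      (∑ k ∈ Finset.range (m + 1), (m.choose k : ℚ_[p]) * (q : ℚ_[p]) ^ k * (L k : ℚ_[p]))
        + (L m : ℚ_[p]) = 2 * (if m = 0 then 1 else 0) := by
    intro m
    have T1 : Filter.Tendsto
        (fun N => ((((∑ k ∈ Finset.range (m + 1), (m.choose k : ℤ_[p]) * q ^ k * S k N)
          + S m N : ℤ_[p])) : ℚ_[p]))
        Filter.atTop
        (nhds ((∑ k ∈ Finset.range (m + 1),
          (m.choose k : ℚ_[p]) * (q : ℚ_[p]) ^ k * (L k : ℚ_[p])) + (L m : ℚ_[p]))) := by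
      have : (fun N => ((((∑ k ∈ Finset.range (m + 1), (m.choose k : ℤ_[p]) * q ^ k * S k N)
          + S m N : ℤ_[p])) : ℚ_[p]))
          = fun N => (∑ k ∈ Finset.range (m + 1),
              (m.choose k : ℚ_[p]) * (q : ℚ_[p]) ^ k * ((S k N : ℚ_[p]))) + ((S m N : ℚ_[p])) := by
        funext N
        rw [PadicInt.coe_add, padicInt_coe_sum]
        push_cast
        ring
      rw [this]
      exact (Filter.Tendsto.add
        (tendsto_finset_sum _ fun k _ => (hL' k).const_mul _) (hL' m))
    have T2 : Filter.Tendsto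
        (fun N => ((((∑ k ∈ Finset.range (m + 1), (m.choose k : ℤ_[p]) * q ^ k * S k N)
          + S m N : ℤ_[p])) : ℚ_[p]))
        Filter.atTop (nhds (2 * (if m = 0 then 1 else 0))) := by
      have heq : (fun N => ((((∑ k ∈ Finset.range (m + 1), (m.choose k : ℤ_[p]) * q ^ k * S k N)
          + S m N : ℤ_[p])) : ℚ_[p]))
          = fun N => ((if m = 0 then 1 else 0 : ℚ_[p])
              + ((qnum q (p ^ N) : ℚ_[p])) ^ m) := by
        funext N
        rw [S_rec m N, PadicInt.coe_add, PadicInt.coe_pow,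
          apply_ite (fun z : ℤ_[p] => (z : ℚ_[p])), PadicInt.coe_one, PadicInt.coe_zero]
      rw [heq]
      by_cases hm : m = 0
      · subst hm
        simp only [if_pos rfl, pow_zero]
        norm_num
      · have : Filter.Tendsto (fun N => ((qnum q (p ^ N) : ℚ_[p])) ^ m)
            Filter.atTop (nhds 0) := by
          have := hqnum0.pow m
          rwa [zero_pow hm] at this
        have h := this.const_add (if m = 0 then (1 : ℚ_[p]) else 0)
        rw [if_neg hm] at h ⊢
        simpa using h
    exact tendsto_nhds_unique T1 T2
  -- 1 + q^m is nonzero in ℚ_p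
  have hunit : ∀ m : ℕ, (1 + (q : ℚ_[p]) ^ m) ≠ 0 := by
    intro m h
    have h0 : (1 + q ^ m : ℤ_[p]) = 0 := by
      have : ((1 + q ^ m : ℤ_[p]) : ℚ_[p]) = 0 := by push_cast; linear_combination h
      exact PadicInt.coe_eq_zero.mp this
    have hd : (p : ℤ_[p]) ∣ q ^ m - 1 := p_dvd_sub_one_pow q hq m
    have h2 : (p : ℤ_[p]) ∣ (2 : ℤ_[p]) := by
      have he : q ^ m - 1 = -2 := by linear_combination h0
      rw [he] at hd
      exact (dvd_neg.mp hd)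
    have hlt : ‖((2 : ℤ) : ℤ_[p])‖ < 1 := by
      rw [PadicInt.norm_lt_one_iff_dvd]
      exact_mod_cast h2
    rw [PadicInt.norm_int_lt_one_iff_dvd] at hlt
    have hdvd : p ∣ 2 := by exact_mod_cast hlt
    have := Nat.le_of_dvd (by norm_num) hdvd
    have h2le := hpp.two_le
    interval_cases p
    · exact (Nat.not_odd_iff_even.mpr (by decide)) hp
  have h1q : (1 + (q : ℚ_[p])) ≠ 0 := by
    have := hunit 1
    rwa [pow_one] at this
  -- uniqueness of solutions of the recurrence
  have key : ∀ m : ℕ, (L m : ℚ_[p]) = 2 / (1 + (q : ℚ_[p])) * E m := by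
    intro m
    induction m using Nat.strong_induction_on with
    | _ m ih =>
      set c : ℚ_[p] := 2 / (1 + (q : ℚ_[p])) with hc
      have hcq : c * (1 + (q : ℚ_[p])) = 2 := div_mul_cancel₀ 2 h1q
      have e1 : (∑ k ∈ Finset.range m, (m.choose k : ℚ_[p]) * (q : ℚ_[p]) ^ k * (c * E k))
          + (q : ℚ_[p]) ^ m * (L m : ℚ_[p]) + (L m : ℚ_[p])
          = 2 * (if m = 0 then 1 else 0) := by
        have h := hrecL m
        rw [Finset.sum_range_succ] at h
        rw [Finset.sum_congr rfl (fun k hk => by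
          rw [ih k (Finset.mem_range.mp hk)])] at h
        rw [Nat.choose_self] at h
        push_cast at h ⊢
        linear_combination h
      have e2 : (∑ k ∈ Finset.range m, (m.choose k : ℚ_[p]) * (q : ℚ_[p]) ^ k * (c * E k))
          + (q : ℚ_[p]) ^ m * (c * E m) + c * E m
          = 2 * (if m = 0 then 1 else 0) := by
        have h := hE m
        rw [Finset.sum_range_succ, Nat.choose_self] at h
        have hmul : (∑ k ∈ Finset.range m, (m.choose k : ℚ_[p]) * (q : ℚ_[p]) ^ k * (c * E k))
            = c * ∑ k ∈ Finset.range m, (m.choose k : ℚ_[p]) * (q : ℚ_[p]) ^ k * E k := by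
          rw [Finset.mul_sum]
          exact Finset.sum_congr rfl fun k _ => by ring
        rw [hmul]
        push_cast at h
        linear_combination c * h + (if m = 0 then (1 : ℚ_[p]) else 0) * hcq
      have hz : (1 + (q : ℚ_[p]) ^ m) * ((L m : ℚ_[p]) - c * E m) = 0 := by
        linear_combination e1 - e2
      rcases mul_eq_zero.mp hz with h | h
      · exact absurd h (hunit m)
      · linear_combination h
  have := hL' n
  rw [key n] at this
  exact this
end

section
/- (Equation (23), removal of the Euler factor at p) For every integer n ≥ 0, the restricted sums ∑_{0 ≤ x < dp^ρ, gcd(x,p)=1} χ(x)(−1)^x [x]_q^n converge in ℤ_p as ρ → ∞, and their limit equals G_n(χ, q) − χ(p)·[p]_q^n·G_n(χ, q^p). (Here q^p also satisfies q^p ≡ 1 (mod p), so G_n(χ, q^p) is defined.) -/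
lemma qnum_mul_s14 {p : ℕ} [Fact p.Prime] (q : ℤ_[p]) (m y : ℕ) :
    qnum q (m * y) = qnum q m * qnum (q ^ m) y := by
  induction y with
  | zero => simp [qnum]
  | succ y ih =>
      have : m * (y + 1) = m * y + m := by ring
      rw [this]
      unfold qnum at *
      rw [Finset.sum_range_add, ih, Finset.sum_range_succ]
      rw [mul_add]
      congr 1
      rw [← pow_mul, Finset.sum_mul]
      refine Finset.sum_congr rfl fun l _ => ?_
      rw [← pow_add, Nat.add_comm]

lemma sum_filter_dvd {M : Type*} [AddCommMonoid M] (p N : ℕ) (hp : 0 < p)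
    (f : ℕ → M) :
    ∑ x ∈ (Finset.range (p * N)).filter (fun x => p ∣ x), f x
      = ∑ y ∈ Finset.range N, f (p * y) := by
  refine Finset.sum_nbij' (fun x => x / p) (fun y => p * y) ?_ ?_ ?_ ?_ ?_
  · intro x hx
    simp only [Finset.mem_filter, Finset.mem_range] at hx ⊢
    exact Nat.div_lt_of_lt_mul (by omega)
  · intro y hy
    simp only [Finset.mem_filter, Finset.mem_range] at hy ⊢
    exact ⟨by exact (Nat.mul_lt_mul_left hp).mpr hy, Dvd.intro y rfl⟩
  · intro x hx
    simp only [Finset.mem_filter] at hx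
    exact Nat.mul_div_cancel' hx.2
  · intro y hy
    exact Nat.mul_div_cancel_left y hp
  · intro x hx
    simp only [Finset.mem_filter] at hx
    rw [Nat.mul_div_cancel' hx.2]

/-- **Equation (23), removal of the Euler factor at `p`.** The restricted sums
`∑_{0 ≤ x < dp^ρ, gcd(x,p)=1} χ(x)(−1)^x [x]_q^n` converge as `ρ → ∞` to
`G_n(χ,q) − χ(p)[p]_q^n G_n(χ,qᵖ)`, where
`G_m(χ,r) = lim_N ∑_{x=0}^{dp^N−1} χ(x)(−1)^x [x]_r^m`. -/
theorem eq23 (p : ℕ) [Fact p.Prime] (hp : Odd p)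
    (q : ℤ_[p]) (hq : (p : ℤ_[p]) ∣ (q - 1))
    (d : ℕ) (hd : Odd d) (hdp : Nat.Coprime d p)
    (χ : DirichletCharacter ℤ_[p] d)
    (G : ℕ → ℤ_[p] → ℤ_[p])
    (hG : ∀ (m : ℕ) (r : ℤ_[p]), (p : ℤ_[p]) ∣ (r - 1) →
      Filter.Tendsto
        (fun N : ℕ => ∑ x ∈ Finset.range (d * p ^ N),
          χ (x : ZMod d) * (-1 : ℤ_[p]) ^ x * (qnum r x) ^ m)
        Filter.atTop (nhds (G m r)))
    (n : ℕ) :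
    Filter.Tendsto
      (fun ρ : ℕ => ∑ x ∈ (Finset.range (d * p ^ ρ)).filter (fun x => ¬ p ∣ x),
        χ (x : ZMod d) * (-1 : ℤ_[p]) ^ x * (qnum q x) ^ n)
      Filter.atTop
      (nhds (G n q - χ (p : ZMod d) * (qnum q p) ^ n * G n (q ^ p))) := by
  have hppos : 0 < p := (Fact.out : p.Prime).pos
  have hqp : (p : ℤ_[p]) ∣ (q ^ p - 1) := by
    have h1 : (q - 1) ∣ (q ^ p - 1) := by
      have := sub_dvd_pow_sub_pow q 1 p
      simpa using this
    exact hq.trans h1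
  set c : ℤ_[p] := χ (p : ZMod d) * (qnum q p) ^ n with hc
  set F : ℤ_[p] → ℕ → ℤ_[p] := fun r N => ∑ x ∈ Finset.range (d * p ^ N),
      χ (x : ZMod d) * (-1 : ℤ_[p]) ^ x * (qnum r x) ^ n with hF
  have hlim : Filter.Tendsto (fun ρ : ℕ => F q ρ - c * F (q ^ p) (ρ - 1))
      Filter.atTop (nhds (G n q - c * G n (q ^ p))) := by
    refine Filter.Tendsto.sub (hG n q hq) ?_
    exact ((hG n (q ^ p) hqp).comp (Filter.tendsto_sub_atTop_nat 1)).const_mul c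
  refine hlim.congr' ?_
  filter_upwards [Filter.eventually_ge_atTop 1] with ρ hρ
  have hsplit : ∀ x : ℕ, ¬ p ∣ x ↔ ¬ (fun x => p ∣ x) x := fun x => Iff.rfl
  have key : (∑ x ∈ (Finset.range (d * p ^ ρ)).filter (fun x => p ∣ x),
        χ (x : ZMod d) * (-1 : ℤ_[p]) ^ x * (qnum q x) ^ n)
      = c * F (q ^ p) (ρ - 1) := by
    have hpow : d * p ^ ρ = p * (d * p ^ (ρ - 1)) := by
      rcases Nat.exists_eq_add_of_le hρ with ⟨k, hk⟩
      subst hk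
      simp [pow_succ]
      ring
    rw [hpow, sum_filter_dvd p (d * p ^ (ρ - 1)) hppos]
    rw [hF, Finset.mul_sum]
    refine Finset.sum_congr rfl fun y _ => ?_
    have h1 : ((p * y : ℕ) : ZMod d) = (p : ZMod d) * (y : ZMod d) := by
      push_cast; ring
    have h2 : (-1 : ℤ_[p]) ^ (p * y) = (-1 : ℤ_[p]) ^ y := by
      rw [pow_mul, hp.neg_one_pow]
    rw [h1, map_mul, h2, qnum_mul_s14, mul_pow]
    ring
  calc F q ρ - c * F (q ^ p) (ρ - 1)
      = F q ρ - (∑ x ∈ (Finset.range (d * p ^ ρ)).filter (fun x => p ∣ x),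
          χ (x : ZMod d) * (-1 : ℤ_[p]) ^ x * (qnum q x) ^ n) := by rw [key]
    _ = ∑ x ∈ (Finset.range (d * p ^ ρ)).filter (fun x => ¬ p ∣ x),
          χ (x : ZMod d) * (-1 : ℤ_[p]) ^ x * (qnum q x) ^ n := by
        rw [hF]
        have := Finset.sum_filter_add_sum_filter_not (Finset.range (d * p ^ ρ))
          (fun x => p ∣ x)
          (fun x => χ (x : ZMod d) * (-1 : ℤ_[p]) ^ x * (qnum q x) ^ n)
        rw [sub_eq_iff_eq_add']
        exact this.symm
end

section
/- (Kummer congruence for the restricted sums / special values of L_{p,q,E}) Let n ≥ 1 and let k, k′ ≥ 1 be integers with k ≡ k′ (mod p^n(p−1)). Then the limits G*_k(χ, q) := lim_{ρ→∞} ∑_{0 ≤ x < dp^ρ, gcd(x,p)=1} χ(x)(−1)^x [x]_q^k exist in ℤ_p and satisfy G*_k(χ, q) ≡ G*_{k′}(χ, q) (mod p^n ℤ_p). -/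
namespace KummerAux

open Finset

variable {p : ℕ} [Fact p.Prime]

lemma qnum_add (q : ℤ_[p]) (m a : ℕ) : qnum q (m + a) = qnum q m + q ^ m * qnum q a := by
  simp [qnum, Finset.sum_range_add, pow_add, Finset.mul_sum]

lemma qnum_mul (q : ℤ_[p]) (a b : ℕ) : qnum q (a * b) = qnum (q ^ a) b * qnum q a := by
  induction b with
  | zero => simp [qnum]
  | succ b ih =>
    rw [Nat.mul_succ, qnum_add, ih,
      show qnum (q ^ a) (b + 1) = qnum (q ^ a) b + (q ^ a) ^ b by
        simp [qnum, Finset.sum_range_succ],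
      add_mul, ← pow_mul]

lemma dvd_qnum_sub_natCast (q : ℤ_[p]) (hq : (p : ℤ_[p]) ∣ q - 1) (x : ℕ) :
    (p : ℤ_[p]) ∣ qnum q x - x := by
  have hx : (x : ℤ_[p]) = ∑ _l ∈ Finset.range x, (1 : ℤ_[p]) := by simp
  rw [qnum, hx, ← Finset.sum_sub_distrib]
  refine Finset.dvd_sum fun l _ => hq.trans ?_
  simpa using sub_dvd_pow_sub_pow q 1 l

lemma dvd_qnum_of_dvd (q : ℤ_[p]) (hq : (p : ℤ_[p]) ∣ q - 1) {x : ℕ} (hx : p ∣ x) :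
    (p : ℤ_[p]) ∣ qnum q x := by
  have h1 := dvd_qnum_sub_natCast q hq x
  have h2 : (p : ℤ_[p]) ∣ (x : ℤ_[p]) := by
    obtain ⟨c, rfl⟩ := hx; push_cast; exact Dvd.intro c rfl
  simpa using dvd_add h1 h2

lemma pow_dvd_qnum (ρ : ℕ) :
    ∀ (q : ℤ_[p]), (p : ℤ_[p]) ∣ q - 1 → ∀ m : ℕ, p ^ ρ ∣ m → (p : ℤ_[p]) ^ ρ ∣ qnum q m := by
  induction ρ with
  | zero => intro q _ m _; simp
  | succ ρ ih =>
    intro q hq m hm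
    obtain ⟨m', rfl⟩ : ∃ m', m = p * m' := by
      obtain ⟨c, hc⟩ := hm; exact ⟨p ^ ρ * c, by rw [hc, pow_succ]; ring⟩
    have hm' : p ^ ρ ∣ m' := by
      have hp0 : 0 < p := (Fact.out : p.Prime).pos
      rw [pow_succ'] at hm
      exact (Nat.mul_dvd_mul_iff_left hp0).mp hm
    rw [qnum_mul q p m', pow_succ]
    refine mul_dvd_mul (ih (q ^ p) (hq.trans ?_) m' hm')
      (dvd_qnum_of_dvd q hq ⟨1, (mul_one p).symm⟩)
    simpa using sub_dvd_pow_sub_pow q 1 p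

lemma pow_pow_sub_one (a : ℤ_[p]) (ha : (p : ℤ_[p]) ∣ a - 1) (m : ℕ) :
    (p : ℤ_[p]) ^ m ∣ a ^ p ^ m - 1 := by
  induction m with
  | zero => simp
  | succ m ih =>
    have hb : (p : ℤ_[p]) ∣ a ^ p ^ m - 1 :=
      ha.trans (by simpa using sub_dvd_pow_sub_pow a 1 (p ^ m))
    rw [show a ^ p ^ (m + 1) - 1 = (∑ i ∈ range p, (a ^ p ^ m) ^ i) * (a ^ p ^ m - 1) by
        rw [geom_sum_mul, ← pow_mul, ← pow_succ],
      pow_succ']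
    exact mul_dvd_mul (dvd_qnum_of_dvd (a ^ p ^ m) hb dvd_rfl) ih

lemma toZMod_eq_zero_iff (z : ℤ_[p]) : PadicInt.toZMod z = 0 ↔ (p : ℤ_[p]) ∣ z := by
  rw [← RingHom.mem_ker, PadicInt.ker_toZMod, PadicInt.maximalIdeal_eq_span_p,
    Ideal.mem_span_singleton]

lemma not_dvd_qnum (q : ℤ_[p]) (hq : (p : ℤ_[p]) ∣ q - 1) {x : ℕ} (hx : ¬ p ∣ x) :
    ¬ (p : ℤ_[p]) ∣ qnum q x := by
  intro h
  have hxx : (p : ℤ_[p]) ∣ (x : ℤ_[p]) := by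
    simpa using dvd_sub h (dvd_qnum_sub_natCast q hq x)
  haveI : NeZero p := ⟨(Fact.out : p.Prime).ne_zero⟩
  rw [← toZMod_eq_zero_iff, map_natCast] at hxx
  exact hx ((ZMod.natCast_eq_zero_iff x p).mp hxx)

lemma fermat (u : ℤ_[p]) (hu : ¬ (p : ℤ_[p]) ∣ u) : (p : ℤ_[p]) ∣ u ^ (p - 1) - 1 := by
  rw [← toZMod_eq_zero_iff, map_sub, map_pow, map_one]
  have h0 : PadicInt.toZMod u ≠ 0 := fun h => hu ((toZMod_eq_zero_iff u).mp h)
  rw [ZMod.pow_card_sub_one_eq_one h0, sub_self]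

lemma termwise (u : ℤ_[p]) (hu : ¬ (p : ℤ_[p]) ∣ u) (n : ℕ) {k k' : ℕ} (hle : k' ≤ k)
    (hkk' : Nat.ModEq (p ^ n * (p - 1)) k k') : (p : ℤ_[p]) ^ n ∣ u ^ k - u ^ k' := by
  obtain ⟨m, hm⟩ := (Nat.modEq_iff_dvd' hle).mp hkk'.symm
  have hkeq : k = k' + p ^ n * (p - 1) * m := by omega
  have h1 : (p : ℤ_[p]) ^ n ∣ u ^ (p ^ n * (p - 1)) - 1 := by
    rw [show p ^ n * (p - 1) = (p - 1) * p ^ n from mul_comm _ _, pow_mul]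
    exact pow_pow_sub_one _ (fermat u hu) n
  have h2 : (p : ℤ_[p]) ^ n ∣ (u ^ (p ^ n * (p - 1))) ^ m - 1 :=
    h1.trans (by simpa using sub_dvd_pow_sub_pow (u ^ (p ^ n * (p - 1))) 1 m)
  have heq : u ^ k - u ^ k' = u ^ k' * ((u ^ (p ^ n * (p - 1))) ^ m - 1) := by
    rw [hkeq, pow_add, pow_mul]; ring
  rw [heq]; exact h2.mul_left _

lemma sum_range_mul' {M : Type*} [AddCommMonoid M] (f : ℕ → M) (N m : ℕ) :
    ∑ i ∈ range (N * m), f i = ∑ j ∈ range m, ∑ y ∈ range N, f (N * j + y) := by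
  induction m with
  | zero => simp
  | succ m ih => rw [Nat.mul_succ, Finset.sum_range_add, ih, Finset.sum_range_succ]

/-- The key Cauchy-step congruence. -/
lemma step (hp : Odd p) (q : ℤ_[p]) (hq : (p : ℤ_[p]) ∣ q - 1)
    (d : ℕ) (hd : Odd d) (χ : DirichletCharacter ℤ_[p] d) (j ρ : ℕ) :
    (p : ℤ_[p]) ^ ρ ∣
      (∑ x ∈ range (d * p ^ (ρ + 1)),
        if ¬ p ∣ x then χ (x : ZMod d) * (-1 : ℤ_[p]) ^ x * (qnum q x) ^ j else 0) -
      ∑ x ∈ range (d * p ^ ρ),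
        if ¬ p ∣ x then χ (x : ZMod d) * (-1 : ℤ_[p]) ^ x * (qnum q x) ^ j else 0 := by
  set T : ℕ → ℤ_[p] := fun x =>
    if ¬ p ∣ x then χ (x : ZMod d) * (-1 : ℤ_[p]) ^ x * (qnum q x) ^ j else 0 with hT
  rcases Nat.eq_zero_or_pos ρ with rfl | hρ
  · simpa using one_dvd _
  set N := d * p ^ ρ with hN
  have hNodd : Odd N := hd.mul hp.pow
  have hpN : p ∣ N := Dvd.dvd.mul_left (dvd_pow_self p hρ.ne') d
  have h1 : ∑ x ∈ range (d * p ^ (ρ + 1)), T x = ∑ i ∈ range p, ∑ y ∈ range N, T (N * i + y) := by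
    rw [show d * p ^ (ρ + 1) = N * p by rw [hN, pow_succ]; ring, sum_range_mul']
  have h2 : ∑ x ∈ range N, T x = ∑ i ∈ range p, (-1 : ℤ_[p]) ^ i * ∑ y ∈ range N, T y := by
    rw [← Finset.sum_mul, neg_one_geom_sum, if_neg (by simpa using hp), one_mul]
  rw [h1, h2, ← Finset.sum_sub_distrib]
  refine Finset.dvd_sum fun i _ => ?_
  rw [Finset.mul_sum, ← Finset.sum_sub_distrib]
  refine Finset.dvd_sum fun y _ => ?_
  by_cases hy : p ∣ y
  · have hxy : p ∣ N * i + y := (hpN.mul_right i).add hy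
    simp [hT, hy, hxy]
  · have hxy : ¬ p ∣ N * i + y := fun h => hy ((Nat.dvd_add_right (hpN.mul_right i)).mp h)
    rw [hT]
    simp only [if_pos hy, if_pos hxy]
    have hχ : ((N * i + y : ℕ) : ZMod d) = (y : ZMod d) := by
      push_cast
      rw [show ((N : ℕ) : ZMod d) = 0 by rw [hN]; push_cast; simp [ZMod.natCast_self]]
      ring
    have hsign : (-1 : ℤ_[p]) ^ (N * i + y) = (-1) ^ i * (-1) ^ y := by
      rw [pow_add, pow_mul, Odd.neg_one_pow hNodd]
    have hqd : (p : ℤ_[p]) ^ ρ ∣ qnum q (N * i + y) - qnum q y := by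
      have hNi : p ^ ρ ∣ N * i := ⟨d * i, by rw [hN]; ring⟩
      have hA : (p : ℤ_[p]) ^ ρ ∣ qnum q (N * i) := pow_dvd_qnum ρ q hq _ hNi
      have hB : (p : ℤ_[p]) ^ ρ ∣ q ^ (N * i) - 1 := by
        rw [← geom_sum_mul q (N * i)]
        exact (hA.mul_right _)
      rw [show qnum q (N * i + y) - qnum q y
          = qnum q (N * i) + (q ^ (N * i) - 1) * qnum q y by rw [qnum_add]; ring]
      exact dvd_add hA (hB.mul_right _)
    have hqk : (p : ℤ_[p]) ^ ρ ∣ qnum q (N * i + y) ^ j - qnum q y ^ j :=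
      hqd.trans (sub_dvd_pow_sub_pow _ _ j)
    rw [hχ, hsign,
      show χ (y : ZMod d) * ((-1 : ℤ_[p]) ^ i * (-1) ^ y) * qnum q (N * i + y) ^ j -
          (-1) ^ i * (χ (y : ZMod d) * (-1) ^ y * qnum q y ^ j)
        = ((-1 : ℤ_[p]) ^ i * (χ (y : ZMod d) * (-1) ^ y)) *
            (qnum q (N * i + y) ^ j - qnum q y ^ j) by ring]
    exact hqk.mul_left _

end KummerAux

open KummerAux Finset in
/-- **Kummer congruence for the restricted sums.** For `k ≡ k' (mod pⁿ(p−1))`, the limits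
`G*_k(χ,q) = lim_ρ ∑_{0 ≤ x < dp^ρ, gcd(x,p)=1} χ(x)(−1)^x [x]_q^k` exist in `ℤ_p` and
satisfy `G*_k(χ,q) ≡ G*_{k'}(χ,q) (mod pⁿ ℤ_p)`. -/
theorem kummer_restricted (p : ℕ) [Fact p.Prime] (hp : Odd p)
    (q : ℤ_[p]) (hq : (p : ℤ_[p]) ∣ (q - 1))
    (d : ℕ) (hd : Odd d) (hdp : Nat.Coprime d p)
    (χ : DirichletCharacter ℤ_[p] d)
    (n k k' : ℕ) (hn : 1 ≤ n) (hk : 1 ≤ k) (hk' : 1 ≤ k')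
    (hkk' : k ≡ k' [MOD p ^ n * (p - 1)]) :
    ∃ Gk Gk' : ℤ_[p],
      Filter.Tendsto
        (fun ρ : ℕ => ∑ x ∈ (Finset.range (d * p ^ ρ)).filter (fun x => ¬ p ∣ x),
          χ (x : ZMod d) * (-1 : ℤ_[p]) ^ x * (qnum q x) ^ k)
        Filter.atTop (nhds Gk) ∧
      Filter.Tendsto
        (fun ρ : ℕ => ∑ x ∈ (Finset.range (d * p ^ ρ)).filter (fun x => ¬ p ∣ x),
          χ (x : ZMod d) * (-1 : ℤ_[p]) ^ x * (qnum q x) ^ k')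
        Filter.atTop (nhds Gk') ∧
      (p : ℤ_[p]) ^ n ∣ (Gk - Gk') := by
  have hp1 : (1 : ℝ) < p := by exact_mod_cast (Fact.out : p.Prime).one_lt
  have key : ∀ j : ℕ, ∃ G : ℤ_[p],
      Filter.Tendsto
        (fun ρ : ℕ => ∑ x ∈ (Finset.range (d * p ^ ρ)).filter (fun x => ¬ p ∣ x),
          χ (x : ZMod d) * (-1 : ℤ_[p]) ^ x * (qnum q x) ^ j)
        Filter.atTop (nhds G) := by
    intro j
    have hcau : CauchySeq
        (fun ρ : ℕ => ∑ x ∈ (Finset.range (d * p ^ ρ)).filter (fun x => ¬ p ∣ x),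
          χ (x : ZMod d) * (-1 : ℤ_[p]) ^ x * (qnum q x) ^ j) := by
      refine cauchySeq_of_le_geometric (p : ℝ)⁻¹ 1 (inv_lt_one_of_one_lt₀ hp1) fun ρ => ?_
      rw [dist_eq_norm, norm_sub_rev, one_mul]
      have hdvd := step hp q hq d hd χ j ρ
      simp only [← Finset.sum_filter] at hdvd
      have hnorm := (PadicInt.norm_le_pow_iff_mem_span_pow _ ρ).mpr
        (Ideal.mem_span_singleton.mpr hdvd)
      calc _ ≤ (p : ℝ) ^ (-(ρ : ℤ)) := hnorm
        _ = ((p : ℝ)⁻¹) ^ ρ := by rw [zpow_neg, zpow_natCast, inv_pow]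
    exact cauchySeq_tendsto_of_complete hcau
  obtain ⟨Gk, hGk⟩ := key k
  obtain ⟨Gk', hGk'⟩ := key k'
  refine ⟨Gk, Gk', hGk, hGk', ?_⟩
  have htend := hGk.sub hGk'
  have hdvd : ∀ ρ : ℕ,
      (p : ℤ_[p]) ^ n ∣
        (∑ x ∈ (Finset.range (d * p ^ ρ)).filter (fun x => ¬ p ∣ x),
          χ (x : ZMod d) * (-1 : ℤ_[p]) ^ x * (qnum q x) ^ k) -
        ∑ x ∈ (Finset.range (d * p ^ ρ)).filter (fun x => ¬ p ∣ x),
          χ (x : ZMod d) * (-1 : ℤ_[p]) ^ x * (qnum q x) ^ k' := by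
    intro ρ
    rw [← Finset.sum_sub_distrib]
    refine Finset.dvd_sum fun x hx => ?_
    have hxm : ¬ p ∣ x := (Finset.mem_filter.mp hx).2
    have hu : ¬ (p : ℤ_[p]) ∣ qnum q x := not_dvd_qnum q hq hxm
    rw [show χ (x : ZMod d) * (-1 : ℤ_[p]) ^ x * qnum q x ^ k -
        χ (x : ZMod d) * (-1 : ℤ_[p]) ^ x * qnum q x ^ k'
        = χ (x : ZMod d) * (-1 : ℤ_[p]) ^ x * (qnum q x ^ k - qnum q x ^ k') by ring]
    rcases le_total k' k with h | h
    · exact (termwise _ hu n h hkk').mul_left _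
    · exact (dvd_sub_comm.mp (termwise _ hu n h hkk'.symm)).mul_left _
  have hcl : IsClosed {z : ℤ_[p] | ‖z‖ ≤ (p : ℝ) ^ (-(n : ℤ))} :=
    isClosed_le continuous_norm continuous_const
  have hmem : Gk - Gk' ∈ {z : ℤ_[p] | ‖z‖ ≤ (p : ℝ) ^ (-(n : ℤ))} := by
    refine hcl.mem_of_tendsto htend (Filter.Eventually.of_forall fun ρ => ?_)
    exact (PadicInt.norm_le_pow_iff_mem_span_pow _ n).mpr
      (Ideal.mem_span_singleton.mpr (hdvd ρ))
  exact Ideal.mem_span_singleton.mp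
    ((PadicInt.norm_le_pow_iff_mem_span_pow _ n).mp hmem)
end
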